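/- arXiv:1501.01781 — 5 statements merged into one kernel-verified Lean document; each statement's English description precedes it below -/
import Mathlib

section
/- Let E be a directed graph in which some vertex v is the base of two distinct cycles g and h. Then E contains an infinite path that is not tail-equivalent to any rational (eventually periodic) path. -/
/-- A directed graph: vertices, edges, source and target (range) maps. -/
structure DGraph where
  V : Type
  E : Type
  src : E → V
  tgt : E → V

namespace DGraph

/-- There is a (possibly empty) directed path from `u` to `w`. -/
def Reaches (G : DGraph) (u w : G.V) : Prop :=
  Relation.ReflTransGen (fun a b => ∃ e : G.E, G.src e = a ∧ G.tgt e = b) u w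

/-- A nonempty list of composable edges, closed, not passing through any vertex twice. -/
def IsCycle (G : DGraph) (p : List G.E) : Prop :=
  p ≠ [] ∧ List.Chain' (fun e f => G.tgt e = G.src f) p ∧
    p.getLast?.map G.tgt = p.head?.map G.src ∧ (p.map G.src).Nodup

/-- The preorder on cycles: `c ≥ c'` iff some vertex of `c` reaches some vertex of `c'`. -/
def CycleGe (G : DGraph) (c c' : List G.E) : Prop :=
  ∃ u w : G.V, u ∈ c.map G.src ∧ w ∈ c'.map G.src ∧ G.Reaches u w

/-- Two cycles are the same cycle iff one is a rotation of the other. -/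
def IsRotation (G : DGraph) (c c' : List G.E) : Prop :=
  ∃ n : ℕ, c' = c.rotate n

/-- An infinite path, as a coherent sequence of edges. -/
def IsInfPath (G : DGraph) (p : ℕ → G.E) : Prop :=
  ∀ n : ℕ, G.tgt (p n) = G.src (p (n + 1))

/-- A rational infinite path: `g g g ⋯` for a (finite, nonempty, closed) path `g`. -/
def IsRational (G : DGraph) (q : ℕ → G.E) : Prop :=
  ∃ (g : List G.E) (hg : g ≠ []),
    List.Chain' (fun e f => G.tgt e = G.src f) g ∧
    g.getLast?.map G.tgt = g.head?.map G.src ∧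
    ∀ k : ℕ, q k = g.get ⟨k % g.length, Nat.mod_lt _ (List.length_pos_iff.mpr hg)⟩

/-- Tail equivalence of infinite paths. -/
def TailEquiv (G : DGraph) (p q : ℕ → G.E) : Prop :=
  ∃ m n : ℕ, ∀ k : ℕ, p (m + k) = q (n + k)

end DGraph

/-!
If `p = g h g² h² ⋯` satisfied `p (k + L) = p k` for all `k ≥ m`, pick a block `gᴺ hᴺ` beyond
`m` whose two runs are longer than `L`. A cycle passes through no vertex twice, so its edges are
distinct and shifting by `L` inside the run of `g` (resp. `h`) forces `|g| ∣ L` (resp. `|h| ∣ L`).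
Shifting the start of the run of `h` back by `L` then lands in the run of `g` at a multiple of
`|g|`, so the periodic extensions of `g` and `h` agree on `[0, L) ⊇ [0, max |g| |h|)`; for two
words without repeated letters this forces `g = h`.
-/

-- `l l l ⋯`, indexed as in `DGraph.IsRational`.
def cyclicSeq {α : Type*} (l : List α) (hl : l ≠ []) (i : ℕ) : α :=
  l.get ⟨i % l.length, Nat.mod_lt _ (List.length_pos_iff.mpr hl)⟩

section CyclicSeq

variable {α : Type*} {l : List α} (hl : l ≠ [])

theorem cyclicSeq_of_lt {i : ℕ} (hi : i < l.length) : cyclicSeq l hl i = l[i] := by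
  simp [cyclicSeq, Nat.mod_eq_of_lt hi]

theorem cyclicSeq_congr {i j : ℕ} (hij : i % l.length = j % l.length) :
    cyclicSeq l hl i = cyclicSeq l hl j := by
  simp only [cyclicSeq, hij]

theorem cyclicSeq_add_of_dvd {d : ℕ} (hd : l.length ∣ d) (i : ℕ) :
    cyclicSeq l hl (d + i) = cyclicSeq l hl i := by
  obtain ⟨t, rfl⟩ := hd
  exact cyclicSeq_congr hl (Nat.mul_add_mod _ _ _)

theorem cyclicSeq_of_dvd {i : ℕ} (hi : l.length ∣ i) : cyclicSeq l hl i = l.head hl := by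
  rw [List.head_eq_getElem, ← cyclicSeq_of_lt hl (List.length_pos_iff.mpr hl)]
  simpa using cyclicSeq_add_of_dvd hl hi 0

theorem cyclicSeq_eq_iff (hnd : l.Nodup) {i j : ℕ} :
    cyclicSeq l hl i = cyclicSeq l hl j ↔ i % l.length = j % l.length := by
  simp [cyclicSeq, hnd.getElem_inj_iff]

theorem length_le_of_cyclicSeq_eq {w : List α} (hw : w ≠ []) (hnd : w.Nodup)
    (h : ∀ i < w.length, cyclicSeq l hl i = cyclicSeq w hw i) : w.length ≤ l.length := by
  by_contra! hlt
  have hwrap : cyclicSeq w hw l.length = cyclicSeq w hw 0 := by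
    rw [← h _ hlt, ← h 0 (List.length_pos_iff.mpr hw), cyclicSeq_of_dvd hl dvd_rfl,
      cyclicSeq_of_dvd hl (dvd_zero _)]
  rw [cyclicSeq_eq_iff hw hnd, Nat.mod_eq_of_lt hlt, Nat.zero_mod,
    List.length_eq_zero_iff] at hwrap
  exact hl hwrap

theorem eq_of_cyclicSeq_eq {w : List α} (hw : w ≠ []) (hlnd : l.Nodup) (hwnd : w.Nodup)
    (h : ∀ i < max l.length w.length, cyclicSeq l hl i = cyclicSeq w hw i) : l = w := by
  have hwl := length_le_of_cyclicSeq_eq hl hw hwnd fun i hi => h i (by omega)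
  have hlw := length_le_of_cyclicSeq_eq hw hl hlnd fun i hi => (h i (by omega)).symm
  refine List.ext_getElem (by omega) fun i hil hiw => ?_
  rw [← cyclicSeq_of_lt hl hil, ← cyclicSeq_of_lt hw hiw]
  exact h i (by omega)

end CyclicSeq

def HasRunAt {α : Type*} (p : ℕ → α) (l : List α) (hl : l ≠ []) (s A : ℕ) : Prop :=
  ∀ j < A, p (s + j) = cyclicSeq l hl j

section EventuallyPeriodic

variable {α : Type*} {p : ℕ → α} {m L : ℕ}

theorem length_dvd_of_hasRunAt (hper : ∀ k ≥ m, p (k + L) = p k) {l : List α} {hl : l ≠ []}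
    (hnd : l.Nodup) {s A : ℕ} (hs : m ≤ s) (hLA : L < A) (hrun : HasRunAt p l hl s A) :
    l.length ∣ L := by
  have hwrap : cyclicSeq l hl L = cyclicSeq l hl 0 := by
    rw [← hrun L hLA, hper s hs, ← hrun 0 (by omega), add_zero]
  rw [cyclicSeq_eq_iff hl hnd, Nat.zero_mod] at hwrap
  exact Nat.dvd_of_mod_eq_zero hwrap

theorem cyclicSeq_eq_of_hasRunAt (hper : ∀ k ≥ m, p (k + L) = p k) {u w : List α}
    {hu : u ≠ []} {hw : w ≠ []} {s A B : ℕ} (hs : m ≤ s) (hLA : L ≤ A) (hdvd : u.length ∣ A - L)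
    (hrunu : HasRunAt p u hu s A) (hrunw : HasRunAt p w hw (s + A) B) {i : ℕ} (hiL : i < L)
    (hiB : i < B) : cyclicSeq w hw i = cyclicSeq u hu i :=
  calc cyclicSeq w hw i = p (s + A + i) := (hrunw i hiB).symm
    _ = p (s + (A - L + i)) := by rw [← hper (s + (A - L + i)) (by omega)]; congr 1; omega
    _ = cyclicSeq u hu (A - L + i) := hrunu _ (by omega)
    _ = cyclicSeq u hu i := cyclicSeq_add_of_dvd hu hdvd i

theorem not_eventually_periodic_of_hasRunAt {u w : List α} {hu : u ≠ []} {hw : w ≠ []}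
    (hund : u.Nodup) (hwnd : w.Nodup) (hne : u ≠ w)
    (hruns : ∀ N, ∃ s ≥ N, HasRunAt p u hu s ((N + 1) * u.length) ∧
      HasRunAt p w hw (s + (N + 1) * u.length) ((N + 1) * w.length))
    (hL : 0 < L) : ¬ ∀ k ≥ m, p (k + L) = p k := by
  intro hper
  obtain ⟨s, hs, hrunu, hrunw⟩ := hruns (m + L)
  have hlong {l : List α} (hl : l ≠ []) : L < (m + L + 1) * l.length :=
    Nat.lt_of_lt_of_le (by omega) (Nat.le_mul_of_pos_right _ (List.length_pos_iff.mpr hl))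
  have hdu := length_dvd_of_hasRunAt hper hund (by omega) (hlong hu) hrunu
  have hdw := length_dvd_of_hasRunAt hper hwnd (by omega) (hlong hw) hrunw
  have hu_le := Nat.le_of_dvd hL hdu
  have hw_le := Nat.le_of_dvd hL hdw
  refine hne (eq_of_cyclicSeq_eq hu hw hund hwnd fun i hi => ?_)
  exact (cyclicSeq_eq_of_hasRunAt hper (by omega) (hlong hu).le
    (Nat.dvd_sub (dvd_mul_left _ _) hdu) hrunu hrunw (by omega) (by have := hlong hw; omega)).symm

end EventuallyPeriodic

namespace DGraph

def IsClosedPathAt (G : DGraph) (v : G.V) (l : List G.E) : Prop :=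
  l.IsChain (fun e f => G.tgt e = G.src f) ∧ l.getLast?.map G.tgt = l.head?.map G.src ∧
    l.head?.map G.src = some v

theorem IsCycle.nodup {G : DGraph} {l : List G.E} (hl : G.IsCycle l) : l.Nodup :=
  hl.2.2.2.of_map G.src

theorem IsCycle.isClosedPathAt {G : DGraph} {v : G.V} {l : List G.E} (hl : G.IsCycle l)
    (hv : l.head?.map G.src = some v) : G.IsClosedPathAt v l :=
  ⟨hl.2.1, hl.2.2.1, hv⟩

variable {G : DGraph} {v : G.V} {l : List G.E}

theorem IsClosedPathAt.src_cyclicSeq_of_dvd (hp : G.IsClosedPathAt v l) (hl : l ≠ []) {i : ℕ}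
    (hi : l.length ∣ i) : G.src (cyclicSeq l hl i) = v := by
  have hbase := hp.2.2
  rw [List.head?_eq_some_head hl, Option.map_some, Option.some_inj] at hbase
  rw [cyclicSeq_of_dvd hl hi, hbase]

theorem IsClosedPathAt.tgt_cyclicSeq (hp : G.IsClosedPathAt v l) (hl : l ≠ []) (i : ℕ) :
    G.tgt (cyclicSeq l hl i) = G.src (cyclicSeq l hl (i + 1)) := by
  have hlen : 0 < l.length := List.length_pos_iff.mpr hl
  have hi : i % l.length < l.length := Nat.mod_lt _ hlen
  have hsucc : cyclicSeq l hl (i + 1) = cyclicSeq l hl (i % l.length + 1) :=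
    cyclicSeq_congr hl (Nat.mod_add_mod i l.length 1).symm
  rw [hsucc, ← cyclicSeq_congr hl (Nat.mod_mod i l.length), cyclicSeq_of_lt hl hi]
  rcases Nat.lt_or_ge (i % l.length + 1) l.length with hlt | hge
  · rw [cyclicSeq_of_lt hl hlt]
    exact List.isChain_iff_getElem.mp hp.1 _ hlt
  · have hlast : i % l.length = l.length - 1 := by omega
    have hclosed := hp.2.1
    rw [List.getLast?_eq_some_getLast hl, List.head?_eq_some_head hl, Option.map_some,
      Option.map_some, Option.some_inj, List.getLast_eq_getElem] at hclosed
    simp only [hlast, Nat.sub_add_cancel hlen, cyclicSeq_of_dvd hl dvd_rfl, hclosed]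

end DGraph

-- The infinite word `(word 0)^(reps 0) (word 1)^(reps 1) ⋯`, as `RunSeq.path`.
structure RunSeq (α : Type*) where
  word : ℕ → List α
  reps : ℕ → ℕ
  word_ne_nil : ∀ r, word r ≠ []
  reps_pos : ∀ r, 0 < reps r

namespace RunSeq

variable {α : Type*} (R : RunSeq α)

def runLength (r : ℕ) : ℕ := R.reps r * (R.word r).length

def runStart (r : ℕ) : ℕ := ∑ i ∈ Finset.range r, R.runLength i

theorem runStart_succ (r : ℕ) : R.runStart (r + 1) = R.runStart r + R.runLength r :=
  Finset.sum_range_succ _ _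

theorem runLength_pos (r : ℕ) : 0 < R.runLength r :=
  Nat.mul_pos (R.reps_pos r) (List.length_pos_iff.mpr (R.word_ne_nil r))

theorem runStart_strictMono : StrictMono R.runStart :=
  strictMono_nat_of_lt_succ fun r => by
    have := R.runLength_pos r
    rw [runStart_succ]
    omega

theorem exists_lt_runStart_succ (k : ℕ) : ∃ r, k < R.runStart (r + 1) :=
  ⟨k, Nat.lt_of_lt_of_le (Nat.lt_succ_self k) R.runStart_strictMono.le_apply⟩

def runIndex (k : ℕ) : ℕ := Nat.find (R.exists_lt_runStart_succ k)

theorem lt_runStart_runIndex_succ (k : ℕ) : k < R.runStart (R.runIndex k + 1) :=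
  Nat.find_spec (R.exists_lt_runStart_succ k)

theorem runStart_runIndex_le (k : ℕ) : R.runStart (R.runIndex k) ≤ k := by
  cases hk : R.runIndex k with
  | zero => simp [runStart]
  | succ r =>
    exact Nat.le_of_not_lt (Nat.find_min (R.exists_lt_runStart_succ k) (by
      change r < R.runIndex k
      omega))

theorem runIndex_runStart_add {r j : ℕ} (hj : j < R.runLength r) :
    R.runIndex (R.runStart r + j) = r := by
  have hlo := R.runStart_runIndex_le (R.runStart r + j)
  have hhi := R.lt_runStart_runIndex_succ (R.runStart r + j)
  have h1 : R.runIndex (R.runStart r + j) < r + 1 :=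
    R.runStart_strictMono.lt_iff_lt.mp (by rw [runStart_succ]; omega)
  have h2 : r < R.runIndex (R.runStart r + j) + 1 :=
    R.runStart_strictMono.lt_iff_lt.mp (by omega)
  omega

def path (k : ℕ) : α :=
  cyclicSeq (R.word (R.runIndex k)) (R.word_ne_nil _) (k - R.runStart (R.runIndex k))

theorem path_runStart_add {r j : ℕ} (hj : j < R.runLength r) :
    R.path (R.runStart r + j) = cyclicSeq (R.word r) (R.word_ne_nil r) j := by
  simp only [path, R.runIndex_runStart_add hj, Nat.add_sub_cancel_left]

theorem exists_eq_runStart_add (k : ℕ) : ∃ r j, j < R.runLength r ∧ k = R.runStart r + j := by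
  have hlo := R.runStart_runIndex_le k
  have hhi := R.lt_runStart_runIndex_succ k
  rw [runStart_succ] at hhi
  exact ⟨R.runIndex k, k - R.runStart (R.runIndex k), by omega, by omega⟩

theorem hasRunAt_path {r n : ℕ} {l : List α} (hl : l ≠ []) (hword : R.word r = l)
    (hreps : R.reps r = n) : HasRunAt R.path l hl (R.runStart r) (n * l.length) := by
  subst hword hreps
  exact fun _ hj => R.path_runStart_add hj

end RunSeq

theorem RunSeq.isInfPath_path {G : DGraph} {v : G.V} (R : RunSeq G.E)
    (hR : ∀ r, G.IsClosedPathAt v (R.word r)) : G.IsInfPath R.path := by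
  intro k
  obtain ⟨r, j, hj, rfl⟩ := R.exists_eq_runStart_add k
  rcases Nat.lt_or_ge (j + 1) (R.runLength r) with hlt | hge
  · rw [R.path_runStart_add hj, add_assoc, R.path_runStart_add hlt]
    exact (hR r).tgt_cyclicSeq _ _
  · have hnext : R.runStart r + j + 1 = R.runStart (r + 1) + 0 := by
      rw [runStart_succ]
      omega
    have hdvd : (R.word r).length ∣ j + 1 := ⟨R.reps r, by rw [runLength] at hj hge; lia⟩
    rw [hnext, R.path_runStart_add hj, R.path_runStart_add (R.runLength_pos _),
      (hR r).tgt_cyclicSeq, (hR r).src_cyclicSeq_of_dvd _ hdvd,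
      (hR (r + 1)).src_cyclicSeq_of_dvd _ (dvd_zero _)]

-- Run `2n` is `g^(n+1)` and run `2n+1` is `h^(n+1)`.
def alternatingPowers {α : Type*} (g h : List α) (hg : g ≠ []) (hh : h ≠ []) : RunSeq α where
  word r := if Even r then g else h
  reps r := r / 2 + 1
  word_ne_nil r := by split <;> assumption
  reps_pos _ := Nat.succ_pos _

theorem alternatingPowers_hasRunAt {α : Type*} {g h : List α} (hg : g ≠ []) (hh : h ≠ [])
    (N : ℕ) : ∃ s ≥ N,
      HasRunAt (alternatingPowers g h hg hh).path g hg s ((N + 1) * g.length) ∧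
      HasRunAt (alternatingPowers g h hg hh).path h hh (s + (N + 1) * g.length)
        ((N + 1) * h.length) := by
  set R := alternatingPowers g h hg hh
  have hstart : R.runStart (2 * N + 1) = R.runStart (2 * N) + (N + 1) * g.length := by
    simp [R, RunSeq.runStart_succ, RunSeq.runLength, alternatingPowers]
  refine ⟨R.runStart (2 * N), le_trans (by omega) R.runStart_strictMono.le_apply, ?_, ?_⟩
  · exact R.hasRunAt_path hg (by simp [R, alternatingPowers]) (by simp [R, alternatingPowers])
  · rw [← hstart]
    exact R.hasRunAt_path hh (by simp [R, alternatingPowers])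
      (by simp only [R, alternatingPowers]; omega)

theorem DGraph.IsRational.exists_periodic {G : DGraph} {q : ℕ → G.E} (hq : G.IsRational q) :
    ∃ L, 0 < L ∧ Function.Periodic q L := by
  obtain ⟨w, hw, -, -, hqw⟩ := hq
  exact ⟨w.length, List.length_pos_iff.mpr hw, fun k => by simp [hqw, Nat.add_mod_right]⟩

theorem DGraph.TailEquiv.exists_eventually_periodic {G : DGraph} {p q : ℕ → G.E} {L : ℕ}
    (hpq : G.TailEquiv p q) (hq : Function.Periodic q L) : ∃ m, ∀ k ≥ m, p (k + L) = p k := by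
  obtain ⟨m, n, htail⟩ := hpq
  refine ⟨m, fun k hk => ?_⟩
  obtain ⟨i, rfl⟩ := Nat.exists_eq_add_of_le hk
  rw [add_assoc, htail, htail, ← add_assoc, hq]

/-- If a vertex `v` is the base of two distinct cycles `g` and `h`, then the
graph contains an infinite path that is not tail-equivalent to any rational path
(witness: `p = g h g² h² ⋯`). -/
theorem stmt8 (G : DGraph) (v : G.V) (g h : List G.E)
    (hg : G.IsCycle g) (hh : G.IsCycle h)
    (hgv : g.head?.map G.src = some v) (hhv : h.head?.map G.src = some v)
    (hne : g ≠ h) :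
    ∃ p : ℕ → G.E, G.IsInfPath p ∧
      ∀ q : ℕ → G.E, G.IsRational q → ¬ G.TailEquiv p q := by
  set R := alternatingPowers g h hg.1 hh.1
  have hclosed : ∀ r, G.IsClosedPathAt v (R.word r) := fun r => by
    simp only [R, alternatingPowers]
    split
    exacts [hg.isClosedPathAt hgv, hh.isClosedPathAt hhv]
  refine ⟨R.path, R.isInfPath_path hclosed, fun q hq hpq => ?_⟩
  obtain ⟨L, hL, hqper⟩ := hq.exists_periodic
  obtain ⟨m, hpper⟩ := hpq.exists_eventually_periodic hqper
  exact not_eventually_periodic_of_hasRunAt hg.nodup hh.nodup hne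
    (alternatingPowers_hasRunAt hg.1 hh.1) hL hpper
end

section
/- Let E be a finite directed graph. Then the relation ≥ on cycles of E (c ≥ c' iff there is a path from a vertex of c to a vertex of c') is antisymmetric if and only if distinct cycles in E have no common vertex. -/
theorem List.exists_eq_append_cons_append_cons_of_not_nodup_map {α β : Type*} {f : α → β}
    {l : List α} (h : ¬ (l.map f).Nodup) :
    ∃ a x b y c, l = a ++ x :: b ++ y :: c ∧ f x = f y := by
  obtain ⟨z, hz⟩ : ∃ z, List.Sublist [z, z] (l.map f) := by
    simpa [List.nodup_iff_sublist] using h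
  obtain ⟨_ | ⟨x, _ | ⟨y, _ | _⟩⟩, hsub, hmap⟩ := List.sublist_map_iff.mp hz <;>
    simp only [List.map_cons, List.map_nil, List.cons.injEq, reduceCtorEq, and_false,
      and_true] at hmap
  obtain ⟨r₁, r₂, rfl, hx, hy⟩ := List.cons_sublist_iff.mp hsub
  obtain ⟨a, b, rfl⟩ := List.append_of_mem hx
  obtain ⟨b', c, rfl⟩ := List.append_of_mem (List.singleton_sublist.mp hy)
  exact ⟨a, x, b ++ b', y, c, by simp, hmap.1.symm.trans hmap.2⟩

namespace DGraph

variable {G : DGraph}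

inductive IsWalk (G : DGraph) : G.V → List G.E → G.V → Prop
  | nil (u : G.V) : G.IsWalk u [] u
  | cons {e : G.E} {p : List G.E} {w : G.V} :
      G.IsWalk (G.tgt e) p w → G.IsWalk (G.src e) (e :: p) w

theorem isWalk_nil_iff {u w : G.V} : G.IsWalk u [] w ↔ u = w :=
  ⟨by rintro ⟨⟩; rfl, by rintro rfl; exact .nil u⟩

theorem isWalk_cons_iff {u w : G.V} {e : G.E} {p : List G.E} :
    G.IsWalk u (e :: p) w ↔ u = G.src e ∧ G.IsWalk (G.tgt e) p w := by
  constructor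
  · rintro (_ | h)
    exact ⟨rfl, h⟩
  · rintro ⟨rfl, h⟩
    exact h.cons

theorem isWalk_append_iff {u w : G.V} {p q : List G.E} :
    G.IsWalk u (p ++ q) w ↔ ∃ v, G.IsWalk u p v ∧ G.IsWalk v q w := by
  induction p generalizing u with
  | nil => exact ⟨fun h => ⟨u, .nil u, h⟩, by rintro ⟨v, ⟨⟩, h⟩; exact h⟩
  | cons e p ih =>
    simp only [List.cons_append, isWalk_cons_iff, ih]
    exact ⟨fun ⟨hu, v, hp, hq⟩ => ⟨v, ⟨hu, hp⟩, hq⟩,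
      fun ⟨v, ⟨hu, hp⟩, hq⟩ => ⟨hu, v, hp, hq⟩⟩

theorem IsWalk.append {u v w : G.V} {p q : List G.E} (hp : G.IsWalk u p v)
    (hq : G.IsWalk v q w) : G.IsWalk u (p ++ q) w :=
  isWalk_append_iff.mpr ⟨v, hp, hq⟩

theorem IsWalk.reaches {u w : G.V} {p : List G.E} (h : G.IsWalk u p w) : G.Reaches u w := by
  induction h with
  | nil u => exact .refl
  | cons _ ih => exact .head ⟨_, rfl, rfl⟩ ih

theorem IsWalk.reaches_of_mem {u w v : G.V} {p : List G.E} (h : G.IsWalk u p w)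
    (hv : v ∈ p.map G.src) : G.Reaches u v ∧ G.Reaches v w := by
  induction h with
  | nil u => simp at hv
  | @cons e p w hp ih =>
    rw [List.map_cons, List.mem_cons] at hv
    rcases hv with rfl | hv
    · exact ⟨.refl, (IsWalk.cons hp).reaches⟩
    · exact ⟨.head ⟨e, rfl, rfl⟩ (ih hv).1, (ih hv).2⟩

theorem Reaches.exists_isWalk {u w : G.V} (h : G.Reaches u w) : ∃ p, G.IsWalk u p w := by
  induction h using Relation.ReflTransGen.head_induction_on with
  | refl => exact ⟨[], .nil _⟩
  | head hstep _ ih =>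
    obtain ⟨e, rfl, rfl⟩ := hstep
    obtain ⟨p, hp⟩ := ih
    exact ⟨e :: p, hp.cons⟩

theorem isWalk_cons_iff_isChain {u w : G.V} {e : G.E} {p : List G.E} :
    G.IsWalk u (e :: p) w ↔ u = G.src e ∧
      List.IsChain (fun e f => G.tgt e = G.src f) (e :: p) ∧
        G.tgt ((e :: p).getLast (List.cons_ne_nil _ _)) = w := by
  induction p generalizing u e with
  | nil => simp [isWalk_cons_iff, isWalk_nil_iff]
  | cons f p ih => simp [isWalk_cons_iff (p := f :: p), ih, and_assoc]

theorem IsCycle.exists_isWalk {c : List G.E} (hc : G.IsCycle c) : ∃ u, G.IsWalk u c u := by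
  obtain ⟨hne, hchain, hclosed, -⟩ := hc
  obtain ⟨e, p, rfl⟩ := List.exists_cons_of_ne_nil hne
  refine ⟨G.src e, isWalk_cons_iff_isChain.mpr ⟨rfl, hchain, ?_⟩⟩
  simpa [List.getLast?_eq_some_getLast] using hclosed

theorem isCycle_of_isWalk {u : G.V} {p : List G.E} (hp : G.IsWalk u p u) (hne : p ≠ [])
    (hnd : (p.map G.src).Nodup) : G.IsCycle p := by
  obtain ⟨e, p, rfl⟩ := List.exists_cons_of_ne_nil hne
  obtain ⟨rfl, hchain, hlast⟩ := isWalk_cons_iff_isChain.mp hp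
  exact ⟨hne, hchain, by simp [List.getLast?_eq_some_getLast, hlast], hnd⟩

theorem IsCycle.reaches {c : List G.E} (hc : G.IsCycle c) {v w : G.V} (hv : v ∈ c.map G.src)
    (hw : w ∈ c.map G.src) : G.Reaches v w := by
  obtain ⟨u, hu⟩ := hc.exists_isWalk
  exact (hu.reaches_of_mem hv).2.trans (hu.reaches_of_mem hw).1

theorem IsRotation.trans {c c' c'' : List G.E} (h : G.IsRotation c c')
    (h' : G.IsRotation c' c'') : G.IsRotation c c'' := by
  obtain ⟨m, rfl⟩ := h
  obtain ⟨n, rfl⟩ := h'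
  exact ⟨m + n, List.rotate_rotate c m n⟩

theorem IsRotation.mem_map_src {c c' : List G.E} (h : G.IsRotation c c') {v : G.V}
    (hv : v ∈ c.map G.src) : v ∈ c'.map G.src := by
  obtain ⟨n, rfl⟩ := h
  simpa [List.map_rotate] using hv

def DistinctCyclesDisjoint (G : DGraph) : Prop :=
  ∀ c c' : List G.E, G.IsCycle c → G.IsCycle c' →
    ∀ v ∈ c.map G.src, v ∈ c'.map G.src → G.IsRotation c c'

theorem DistinctCyclesDisjoint.exists_isCycle_of_isWalk (hG : G.DistinctCyclesDisjoint)
    {u : G.V} {p : List G.E} (hp : G.IsWalk u p u) (hne : p ≠ []) :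
    ∃ γ, G.IsCycle γ ∧ ∀ v ∈ p.map G.src, v ∈ γ.map G.src := by
  by_cases hnd : (p.map G.src).Nodup
  · exact ⟨p, isCycle_of_isWalk hp hne hnd, fun _ => id⟩
  obtain ⟨a, e, b, f, c, hsplit, hef⟩ :=
    List.exists_eq_append_cons_append_cons_of_not_nodup_map hnd
  obtain ⟨v, hab, hfc⟩ := isWalk_append_iff.mp (hsplit ▸ hp)
  obtain ⟨v', ha, heb⟩ := isWalk_append_iff.mp hab
  obtain ⟨rfl, -⟩ := isWalk_cons_iff.mp heb
  obtain ⟨rfl, -⟩ := isWalk_cons_iff.mp hfc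
  rw [← hef] at heb hfc
  obtain ⟨γ₁, hγ₁, h₁⟩ := hG.exists_isCycle_of_isWalk heb (List.cons_ne_nil _ _)
  obtain ⟨γ₂, hγ₂, h₂⟩ := hG.exists_isCycle_of_isWalk (ha.append hfc) (by simp)
  have hrot : G.IsRotation γ₁ γ₂ :=
    hG γ₁ γ₂ hγ₁ hγ₂ (G.src e) (h₁ _ (by simp)) (h₂ _ (by simp [hef]))
  refine ⟨γ₂, hγ₂, fun v hv => ?_⟩
  simp only [hsplit, List.map_append, List.mem_append] at hv h₂
  rcases hv with (hv | hv) | hv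
  · exact h₂ v (.inl hv)
  · exact hrot.mem_map_src (h₁ v hv)
  · exact h₂ v (.inr hv)
termination_by p.length
decreasing_by all_goals simp only [hsplit, List.length_append, List.length_cons]; omega

theorem DistinctCyclesDisjoint.exists_isCycle_of_reaches (hG : G.DistinctCyclesDisjoint)
    {u w : G.V} (huw : G.Reaches u w) (hwu : G.Reaches w u) :
    u = w ∨ ∃ γ, G.IsCycle γ ∧ u ∈ γ.map G.src ∧ w ∈ γ.map G.src := by
  obtain ⟨p, hp⟩ := huw.exists_isWalk
  obtain ⟨q, hq⟩ := hwu.exists_isWalk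
  rcases p with _ | ⟨e, p⟩
  · exact .inl (isWalk_nil_iff.mp hp)
  rcases q with _ | ⟨f, q⟩
  · exact .inl (isWalk_nil_iff.mp hq).symm
  obtain ⟨γ, hγ, hmem⟩ := hG.exists_isCycle_of_isWalk (hp.append hq) (by simp)
  obtain ⟨rfl, -⟩ := isWalk_cons_iff.mp hp
  obtain ⟨rfl, -⟩ := isWalk_cons_iff.mp hq
  exact .inr ⟨γ, hγ, hmem _ (by simp), hmem _ (by simp)⟩

end DGraph

theorem stmt11_general (G : DGraph) :
    (∀ c c' : List G.E, G.IsCycle c → G.IsCycle c' →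
        G.CycleGe c c' → G.CycleGe c' c → G.IsRotation c c') ↔
    (∀ c c' : List G.E, G.IsCycle c → G.IsCycle c' → ¬ G.IsRotation c c' →
        ∀ v : G.V, v ∈ c.map G.src → v ∉ c'.map G.src) := by
  constructor
  · intro hanti c c' hc hc' hrot v hv hv'
    exact hrot (hanti c c' hc hc' ⟨v, v, hv, hv', .refl⟩ ⟨v, v, hv', hv, .refl⟩)
  · intro hdisj c c' hc hc' ⟨u, w, hu, hw, huw⟩ ⟨w', u', hw', hu', hwu⟩
    have hG : G.DistinctCyclesDisjoint := fun d d' hd hd' v hv hv' =>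
      by_contra fun hrot => hdisj d d' hd hd' hrot v hv hv'
    have hwu : G.Reaches w u := ((hc'.reaches hw hw').trans hwu).trans (hc.reaches hu' hu)
    rcases hG.exists_isCycle_of_reaches huw hwu with rfl | ⟨γ, hγ, huγ, hwγ⟩
    · exact hG c c' hc hc' u hu hw
    · exact (hG c γ hc hγ u hu huγ).trans (hG γ c' hγ hc' w hwγ hw)

/-- For a finite graph, the relation `≥` on cycles is antisymmetric (up to
rotation) if and only if distinct cycles have no common vertex. -/
theorem stmt11 (G : DGraph) [Fintype G.V] [Fintype G.E] :
    (∀ c c' : List G.E, G.IsCycle c → G.IsCycle c' →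
        G.CycleGe c c' → G.CycleGe c' c → G.IsRotation c c') ↔
    (∀ c c' : List G.E, G.IsCycle c → G.IsCycle c' → ¬ G.IsRotation c c' →
        ∀ v : G.V, v ∈ c.map G.src → v ∉ c'.map G.src) :=
  stmt11_general G
end

section
/- Let K be a field and E an arbitrary directed graph whose Leavitt path algebra is L = L_K(E). Let A be the ideal of L generated by the set X of all acyclic vertices (vertices v such that the tree T_E(v) contains no cycle) and let N be the ideal generated by the set Y of vertices lying on cycles without exits. Then A ∩ N = 0. -/
/-- Generators of the Leavitt path algebra: vertices, edges (real), ghost edges. -/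
inductive LPAGen (G : DGraph) : Type
  | vertex : G.V → LPAGen G
  | edge : G.E → LPAGen G
  | ghost : G.E → LPAGen G

open Classical in
/-- The defining relations of the Leavitt path algebra `L_K(E)`: the vertices are pairwise
orthogonal idempotents, `s(e)e = e = e r(e)`, `r(e)e* = e* = e* s(e)`, the (CK-1)
relations `e* f = δ_{e,f} r(e)`, and the (CK-2) relations `v = ∑_{s(e)=v} e e*` for every
regular vertex `v`. -/
inductive LPARel (K : Type) [Field K] (G : DGraph) :
    FreeAlgebra K (LPAGen G) → FreeAlgebra K (LPAGen G) → Prop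
  | vtx (u v : G.V) :
      LPARel K G (FreeAlgebra.ι K (LPAGen.vertex u) * FreeAlgebra.ι K (LPAGen.vertex v))
        (if u = v then FreeAlgebra.ι K (LPAGen.vertex u) else 0)
  | src_edge (e : G.E) :
      LPARel K G (FreeAlgebra.ι K (LPAGen.vertex (G.src e)) * FreeAlgebra.ι K (LPAGen.edge e))
        (FreeAlgebra.ι K (LPAGen.edge e))
  | edge_tgt (e : G.E) :
      LPARel K G (FreeAlgebra.ι K (LPAGen.edge e) * FreeAlgebra.ι K (LPAGen.vertex (G.tgt e)))
        (FreeAlgebra.ι K (LPAGen.edge e))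
  | tgt_ghost (e : G.E) :
      LPARel K G (FreeAlgebra.ι K (LPAGen.vertex (G.tgt e)) * FreeAlgebra.ι K (LPAGen.ghost e))
        (FreeAlgebra.ι K (LPAGen.ghost e))
  | ghost_src (e : G.E) :
      LPARel K G (FreeAlgebra.ι K (LPAGen.ghost e) * FreeAlgebra.ι K (LPAGen.vertex (G.src e)))
        (FreeAlgebra.ι K (LPAGen.ghost e))
  | ck1 (e f : G.E) :
      LPARel K G (FreeAlgebra.ι K (LPAGen.ghost e) * FreeAlgebra.ι K (LPAGen.edge f))
        (if e = f then FreeAlgebra.ι K (LPAGen.vertex (G.tgt e)) else 0)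
  | ck2 (v : G.V) (hfin : {e : G.E | G.src e = v}.Finite)
      (hne : {e : G.E | G.src e = v}.Nonempty) :
      LPARel K G (FreeAlgebra.ι K (LPAGen.vertex v))
        (∑ e ∈ hfin.toFinset,
          FreeAlgebra.ι K (LPAGen.edge e) * FreeAlgebra.ι K (LPAGen.ghost e))

/-- The Leavitt path algebra of the graph `G` over the field `K`. -/
abbrev LPA (K : Type) [Field K] (G : DGraph) := RingQuot (LPARel K G)

/-- The image of a vertex `v` in the Leavitt path algebra. -/
noncomputable def lpaVtx (K : Type) [Field K] (G : DGraph) (v : G.V) : LPA K G :=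
  RingQuot.mkRingHom (LPARel K G) (FreeAlgebra.ι K (LPAGen.vertex v))

/-- A vertex is acyclic if its tree `T_E(v)` contains no cycle. -/
def DGraph.IsAcyclicVertex (G : DGraph) (v : G.V) : Prop :=
  ¬ ∃ (c : List G.E) (w : G.V), G.IsCycle c ∧ w ∈ c.map G.src ∧ G.Reaches v w

/-- A cycle has no exits. -/
def DGraph.NoExit (G : DGraph) (c : List G.E) : Prop :=
  ∀ e : G.E, G.src e ∈ c.map G.src → e ∈ c

namespace DGraph

variable (G : DGraph)

def IsPath : G.V → List G.E → G.V → Prop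
  | a, [], b => a = b
  | a, e :: l, b => a = G.src e ∧ IsPath (G.tgt e) l b

def pathEnd : G.V → List G.E → G.V
  | a, [] => a
  | _, e :: l => pathEnd (G.tgt e) l

def IsHereditary (H : Set G.V) : Prop :=
  ∀ e : G.E, G.src e ∈ H → G.tgt e ∈ H

def NoExitCycleVertex (v : G.V) : Prop :=
  ∃ c : List G.E, G.IsCycle c ∧ v ∈ c.map G.src ∧ G.NoExit c

variable {G} {a b c : G.V} {l l' : List G.E}

theorem IsPath.pathEnd_eq (h : G.IsPath a l b) : G.pathEnd a l = b := by
  induction l generalizing a with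
  | nil => exact h
  | cons e l ih => exact ih h.2

theorem IsPath.unique (h : G.IsPath a l b) (h' : G.IsPath a l c) : b = c :=
  h.pathEnd_eq.symm.trans h'.pathEnd_eq

theorem isPath_append : G.IsPath a (l ++ l') c ↔ ∃ b, G.IsPath a l b ∧ G.IsPath b l' c := by
  induction l generalizing a with
  | nil => exact ⟨fun h => ⟨a, rfl, h⟩, by rintro ⟨b, rfl, h⟩; exact h⟩
  | cons e l ih => simp only [List.cons_append, IsPath, ih, and_assoc, exists_and_left]

theorem IsPath.append (h : G.IsPath a l b) (h' : G.IsPath b l' c) : G.IsPath a (l ++ l') c :=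
  isPath_append.2 ⟨b, h, h'⟩

theorem IsPath.reaches (h : G.IsPath a l b) : G.Reaches a b := by
  induction l generalizing a with
  | nil => exact h ▸ Relation.ReflTransGen.refl
  | cons e l ih => exact Relation.ReflTransGen.head ⟨e, h.1.symm, rfl⟩ (ih h.2)

theorem IsHereditary.mem_of_reaches {H : Set G.V} (hH : G.IsHereditary H) (ha : a ∈ H)
    (h : G.Reaches a b) : b ∈ H := by
  induction h with
  | refl => exact ha
  | tail _ hstep ih =>
    obtain ⟨e, rfl, rfl⟩ := hstep
    exact hH e ih

theorem IsCycle.tgt_mem_map_src {p : List G.E} (hp : G.IsCycle p) {e : G.E} (he : e ∈ p) :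
    G.tgt e ∈ p.map G.src := by
  obtain ⟨hne, hchain, hclosed, -⟩ := hp
  obtain ⟨s, t, rfl⟩ := List.mem_iff_append.1 he
  cases t with
  | nil =>
    rw [List.head?_eq_some_head hne] at hclosed
    simp only [List.getLast?_concat, Option.map_some, Option.some.injEq] at hclosed
    rw [hclosed]
    exact List.mem_map_of_mem (List.head_mem hne)
  | cons f t =>
    have := (List.isChain_append.1 hchain).2.1
    simp only [List.isChain_cons_cons] at this
    rw [this.1]
    simp

theorem isHereditary_noExitCycleVertex : G.IsHereditary {v | G.NoExitCycleVertex v} := by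
  rintro e ⟨p, hp, hmem, hnx⟩
  exact ⟨p, hp, hp.tgt_mem_map_src (hnx e hmem), hnx⟩

theorem isHereditary_isAcyclicVertex : G.IsHereditary {v | G.IsAcyclicVertex v} := by
  rintro e he ⟨p, w, hp, hw, hr⟩
  exact he ⟨p, w, hp, hw, Relation.ReflTransGen.head ⟨e, rfl, rfl⟩ hr⟩

theorem IsAcyclicVertex.not_reaches (ha : G.IsAcyclicVertex a) (hb : G.NoExitCycleVertex b) :
    ¬G.Reaches a b := by
  obtain ⟨p, hp, hmem, -⟩ := hb
  exact fun h => ha ⟨p, b, hp, hmem, h⟩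

theorem NoExitCycleVertex.not_reaches (ha : G.NoExitCycleVertex a) (hb : G.IsAcyclicVertex b) :
    ¬G.Reaches a b := fun h =>
  hb.not_reaches (isHereditary_noExitCycleVertex.mem_of_reaches ha h) Relation.ReflTransGen.refl

end DGraph

section PointedPrefix

variable {α β : Type*} {p q r : α × List β}

/-- A path is recorded with its start vertex, so that empty paths at distinct vertices are
incomparable. -/
def PointedPrefix (p q : α × List β) : Prop :=
  p.1 = q.1 ∧ p.2 <+: q.2

theorem PointedPrefix.trans (hpq : PointedPrefix p q) (hqr : PointedPrefix q r) :
    PointedPrefix p r :=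
  ⟨hpq.1.trans hqr.1, hpq.2.trans hqr.2⟩

theorem PointedPrefix.eq_of_length_le (hpq : PointedPrefix p q) (h : q.2.length ≤ p.2.length) :
    p = q :=
  Prod.ext hpq.1 (hpq.2.eq_of_length (le_antisymm hpq.2.length_le h))

theorem PointedPrefix.total (hpr : PointedPrefix p r) (hqr : PointedPrefix q r) :
    PointedPrefix p q ∨ PointedPrefix q p :=
  (List.prefix_or_prefix_of_prefix hpr.2 hqr.2).imp (⟨hpr.1.trans hqr.1.symm, ·⟩)
    (⟨hqr.1.trans hpr.1.symm, ·⟩)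

open Classical

noncomputable def minimalPrefixes (Q : Finset (α × List β)) : Finset (α × List β) :=
  Q.filter fun p => ∀ q ∈ Q, PointedPrefix q p → q = p

variable {Q : Finset (α × List β)}

theorem minimalPrefixes_subset : minimalPrefixes Q ⊆ Q :=
  Finset.filter_subset _ _

theorem exists_mem_minimalPrefixes (hq : q ∈ Q) :
    ∃ p ∈ minimalPrefixes Q, PointedPrefix p q := by
  obtain ⟨p, hp, hmin⟩ := (Q.filter (PointedPrefix · q)).exists_min_image (·.2.length)
    ⟨q, Finset.mem_filter.2 ⟨hq, rfl, List.prefix_rfl⟩⟩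
  obtain ⟨hpQ, hpq⟩ := Finset.mem_filter.1 hp
  refine ⟨p, Finset.mem_filter.2 ⟨hpQ, fun r hr hrp => ?_⟩, hpq⟩
  exact hrp.eq_of_length_le (hmin r (Finset.mem_filter.2 ⟨hr, hrp.trans hpq⟩))

theorem not_pointedPrefix_of_mem_minimalPrefixes {p' : α × List β}
    (hp : p ∈ minimalPrefixes Q) (hp' : p' ∈ minimalPrefixes Q) (hq : q ∈ Q)
    (hpq : PointedPrefix p q) (hne : p' ≠ p) :
    ¬PointedPrefix p' q ∧ ¬PointedPrefix q p' := by
  have hmin := (Finset.mem_filter.1 hp).2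
  have hmin' := (Finset.mem_filter.1 hp').2
  refine ⟨fun hp'q => ?_, fun hqp' => ?_⟩
  · rcases hp'q.total hpq with h | h
    · exact hne (hmin p' (minimalPrefixes_subset hp') h)
    · exact hne (hmin' p (minimalPrefixes_subset hp) h).symm
  · exact hne (hmin' p (minimalPrefixes_subset hp) (hmin' q hq hqp' ▸ hpq)).symm

end PointedPrefix

section FreeAlgebraQuotient

variable {R X : Type*} [CommSemiring R] {r : FreeAlgebra R X → FreeAlgebra R X → Prop}
  {S : Submodule R (RingQuot r)}

theorem RingQuot.mul_mem_of_forall_ι_mul_mem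
    (hS : ∀ (x : X), ∀ s ∈ S, RingQuot.mkRingHom r (FreeAlgebra.ι R x) * s ∈ S)
    (y : RingQuot r) {s : RingQuot r} (hs : s ∈ S) : y * s ∈ S := by
  obtain ⟨z, rfl⟩ := RingQuot.mkAlgHom_surjective R r y
  induction z using FreeAlgebra.induction generalizing s with
  | grade0 c => rw [AlgHom.commutes, ← Algebra.smul_def]; exact S.smul_mem c hs
  | grade1 x =>
    convert hS x s hs using 2
    exact DFunLike.congr_fun (RingQuot.mkAlgHom_coe R r) _
  | mul p q hp hq => rw [map_mul, mul_assoc]; exact hp (hq hs)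
  | add p q hp hq => rw [map_add, add_mul]; exact S.add_mem (hp hs) (hq hs)

theorem RingQuot.mul_mem_of_forall_mul_ι_mem
    (hS : ∀ (x : X), ∀ s ∈ S, s * RingQuot.mkRingHom r (FreeAlgebra.ι R x) ∈ S)
    (y : RingQuot r) {s : RingQuot r} (hs : s ∈ S) : s * y ∈ S := by
  obtain ⟨z, rfl⟩ := RingQuot.mkAlgHom_surjective R r y
  induction z using FreeAlgebra.induction generalizing s with
  | grade0 c => rw [AlgHom.commutes, ← Algebra.commutes, ← Algebra.smul_def]; exact S.smul_mem c hs
  | grade1 x =>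
    convert hS x s hs using 2
    exact DFunLike.congr_fun (RingQuot.mkAlgHom_coe R r) _
  | mul p q hp hq => rw [map_mul, ← mul_assoc]; exact hq (hp hs)
  | add p q hp hq => rw [map_add, mul_add]; exact S.add_mem (hp hs) (hq hs)

end FreeAlgebraQuotient

noncomputable def lpaEdge (K : Type) [Field K] (G : DGraph) (e : G.E) : LPA K G :=
  RingQuot.mkRingHom (LPARel K G) (FreeAlgebra.ι K (LPAGen.edge e))

noncomputable def lpaGhost (K : Type) [Field K] (G : DGraph) (e : G.E) : LPA K G :=
  RingQuot.mkRingHom (LPARel K G) (FreeAlgebra.ι K (LPAGen.ghost e))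

noncomputable def lpaPath (K : Type) [Field K] (G : DGraph) (l : List G.E) : LPA K G :=
  (l.map (lpaEdge K G)).prod

/-- The ghost path `β* = e_n* ⋯ e_1*` of `β = e_1 ⋯ e_n`. -/
noncomputable def lpaGhostPath (K : Type) [Field K] (G : DGraph) (l : List G.E) : LPA K G :=
  (l.reverse.map (lpaGhost K G)).prod

/-- The monomial `α v β*`. -/
noncomputable def lpaMonomial (K : Type) [Field K] (G : DGraph) (α : List G.E) (v : G.V)
    (β : List G.E) : LPA K G :=
  lpaPath K G α * lpaVtx K G v * lpaGhostPath K G β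

def lpaMonomials (K : Type) [Field K] (G : DGraph) (H : Set G.V) : Set (LPA K G) :=
  {x | ∃ (a b v : G.V) (α β : List G.E),
    v ∈ H ∧ G.IsPath a α v ∧ G.IsPath b β v ∧ x = lpaMonomial K G α v β}

section Relations

open Classical

variable {K : Type} [Field K] {G : DGraph}

theorem lpaVtx_mul_lpaVtx (u v : G.V) :
    lpaVtx K G u * lpaVtx K G v = if u = v then lpaVtx K G u else 0 := by
  simpa [lpaVtx, apply_ite] using RingQuot.mkRingHom_rel (LPARel.vtx (K := K) u v)

theorem lpaVtx_src_mul_lpaEdge (e : G.E) :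
    lpaVtx K G (G.src e) * lpaEdge K G e = lpaEdge K G e := by
  simpa [lpaVtx, lpaEdge] using RingQuot.mkRingHom_rel (LPARel.src_edge (K := K) e)

theorem lpaEdge_mul_lpaVtx_tgt (e : G.E) :
    lpaEdge K G e * lpaVtx K G (G.tgt e) = lpaEdge K G e := by
  simpa [lpaVtx, lpaEdge] using RingQuot.mkRingHom_rel (LPARel.edge_tgt (K := K) e)

theorem lpaVtx_tgt_mul_lpaGhost (e : G.E) :
    lpaVtx K G (G.tgt e) * lpaGhost K G e = lpaGhost K G e := by
  simpa [lpaVtx, lpaGhost] using RingQuot.mkRingHom_rel (LPARel.tgt_ghost (K := K) e)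

theorem lpaGhost_mul_lpaVtx_src (e : G.E) :
    lpaGhost K G e * lpaVtx K G (G.src e) = lpaGhost K G e := by
  simpa [lpaVtx, lpaGhost] using RingQuot.mkRingHom_rel (LPARel.ghost_src (K := K) e)

theorem lpaGhost_mul_lpaEdge (e f : G.E) :
    lpaGhost K G e * lpaEdge K G f = if e = f then lpaVtx K G (G.tgt e) else 0 := by
  simpa [lpaVtx, lpaEdge, lpaGhost, apply_ite] using
    RingQuot.mkRingHom_rel (LPARel.ck1 (K := K) e f)

theorem lpaVtx_mul_lpaEdge (u : G.V) (e : G.E) :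
    lpaVtx K G u * lpaEdge K G e = if u = G.src e then lpaEdge K G e else 0 := by
  rw [← lpaVtx_src_mul_lpaEdge, ← mul_assoc, lpaVtx_mul_lpaVtx]
  split_ifs <;> simp_all

theorem lpaGhost_mul_lpaVtx (e : G.E) (u : G.V) :
    lpaGhost K G e * lpaVtx K G u = if u = G.src e then lpaGhost K G e else 0 := by
  rw [← lpaGhost_mul_lpaVtx_src, mul_assoc, lpaVtx_mul_lpaVtx]
  split_ifs <;> simp_all

end Relations

section Monomials

open Classical DGraph

variable {K : Type} [Field K] {G : DGraph} {a b u v w : G.V} {α β γ τ : List G.E}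

theorem lpaMonomial_edge_cons (e : G.E) (α : List G.E) (v : G.V) (β : List G.E) :
    lpaMonomial K G (e :: α) v β = lpaEdge K G e * lpaMonomial K G α v β := by
  simp [lpaMonomial, lpaPath, mul_assoc]

theorem lpaMonomial_ghost_cons (α : List G.E) (v : G.V) (e : G.E) (β : List G.E) :
    lpaMonomial K G α v (e :: β) = lpaMonomial K G α v β * lpaGhost K G e := by
  simp [lpaMonomial, lpaGhostPath, mul_assoc]

theorem lpaMonomial_nil_left (v : G.V) (β : List G.E) :
    lpaMonomial K G [] v β = lpaVtx K G v * lpaGhostPath K G β := by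
  simp [lpaMonomial, lpaPath]

theorem lpaMonomial_nil_right (α : List G.E) (v : G.V) :
    lpaMonomial K G α v [] = lpaPath K G α * lpaVtx K G v := by
  simp [lpaMonomial, lpaGhostPath]

theorem lpaPath_mul_lpaMonomial (α τ : List G.E) (w : G.V) (δ : List G.E) :
    lpaPath K G α * lpaMonomial K G τ w δ = lpaMonomial K G (α ++ τ) w δ := by
  simp [lpaMonomial, lpaPath, mul_assoc]

theorem lpaMonomial_mul_lpaGhostPath (α : List G.E) (u : G.V) (τ δ : List G.E) :
    lpaMonomial K G α u τ * lpaGhostPath K G δ = lpaMonomial K G α u (δ ++ τ) := by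
  simp [lpaMonomial, lpaGhostPath, mul_assoc]

theorem lpaVtx_mul_lpaMonomial (hα : G.IsPath a α v) (u : G.V) (β : List G.E) :
    lpaVtx K G u * lpaMonomial K G α v β = if u = a then lpaMonomial K G α v β else 0 := by
  cases α with
  | nil =>
    obtain rfl : a = v := hα
    rw [lpaMonomial_nil_left, ← mul_assoc, lpaVtx_mul_lpaVtx]
    split_ifs <;> simp_all
  | cons e α =>
    rw [lpaMonomial_edge_cons, ← mul_assoc, lpaVtx_mul_lpaEdge, ← hα.1]
    split_ifs <;> simp

theorem lpaMonomial_mul_lpaVtx (hβ : G.IsPath b β v) (α : List G.E) (u : G.V) :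
    lpaMonomial K G α v β * lpaVtx K G u = if u = b then lpaMonomial K G α v β else 0 := by
  cases β with
  | nil =>
    obtain rfl : b = v := hβ
    rw [lpaMonomial_nil_right, mul_assoc, lpaVtx_mul_lpaVtx]
    split_ifs <;> simp_all
  | cons e β =>
    rw [lpaMonomial_ghost_cons, mul_assoc, lpaGhost_mul_lpaVtx, ← hβ.1]
    split_ifs <;> simp

/-- (CK1) at the junction of two monomials. -/
theorem lpaMonomial_ghost_cons_mul_edge_cons (e f : G.E) (hγ : G.IsPath (G.tgt f) γ w)
    (α : List G.E) (u : G.V) (β δ : List G.E) :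
    lpaMonomial K G α u (e :: β) * lpaMonomial K G (f :: γ) w δ =
      if e = f then lpaMonomial K G α u β * lpaMonomial K G γ w δ else 0 := by
  rw [lpaMonomial_ghost_cons, lpaMonomial_edge_cons, mul_assoc, ← mul_assoc (lpaGhost K G e),
    lpaGhost_mul_lpaEdge]
  split_ifs with hef
  · rw [hef, lpaVtx_mul_lpaMonomial hγ, if_pos rfl]
  · simp

theorem lpaMonomial_mul_lpaMonomial_append (hβ : G.IsPath b β u) (hτ : G.IsPath u τ w)
    (α δ : List G.E) :
    lpaMonomial K G α u β * lpaMonomial K G (β ++ τ) w δ = lpaMonomial K G (α ++ τ) w δ := by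
  induction β generalizing b with
  | nil =>
    obtain rfl : b = u := hβ
    rw [List.nil_append, lpaMonomial_nil_right, mul_assoc, lpaVtx_mul_lpaMonomial hτ, if_pos rfl,
      lpaPath_mul_lpaMonomial]
  | cons e β ih =>
    rw [List.cons_append, lpaMonomial_ghost_cons_mul_edge_cons e e (hβ.2.append hτ), if_pos rfl,
      ih hβ.2]

theorem lpaMonomial_append_mul_lpaMonomial (hγ : G.IsPath a γ w) (hτ : G.IsPath w τ u)
    (α δ : List G.E) :
    lpaMonomial K G α u (γ ++ τ) * lpaMonomial K G γ w δ = lpaMonomial K G α u (δ ++ τ) := by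
  induction γ generalizing a with
  | nil =>
    obtain rfl : a = w := hγ
    rw [List.nil_append, lpaMonomial_nil_left, ← mul_assoc, lpaMonomial_mul_lpaVtx hτ, if_pos rfl,
      lpaMonomial_mul_lpaGhostPath]
  | cons f γ ih =>
    rw [List.cons_append, lpaMonomial_ghost_cons_mul_edge_cons f f hγ.2, if_pos rfl, ih hγ.2]

theorem lpaMonomial_mul_lpaMonomial_eq_zero (hβ : G.IsPath b β u) (hγ : G.IsPath a γ w)
    (h₁ : ¬PointedPrefix (b, β) (a, γ)) (h₂ : ¬PointedPrefix (a, γ) (b, β)) (α δ : List G.E) :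
    lpaMonomial K G α u β * lpaMonomial K G γ w δ = 0 := by
  induction β generalizing b a γ with
  | nil =>
    obtain rfl : b = u := hβ
    rw [lpaMonomial_nil_right, mul_assoc, lpaVtx_mul_lpaMonomial hγ,
      if_neg fun h => h₁ ⟨h, List.nil_prefix⟩, mul_zero]
  | cons e β ih =>
    cases γ with
    | nil =>
      obtain rfl : a = w := hγ
      rw [lpaMonomial_nil_left, ← mul_assoc, lpaMonomial_mul_lpaVtx hβ,
        if_neg fun h => h₂ ⟨h, List.nil_prefix⟩, zero_mul]
    | cons f γ =>
      rw [lpaMonomial_ghost_cons_mul_edge_cons e f hγ.2]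
      split_ifs with hef
      · subst hef
        obtain ⟨rfl, hβ⟩ := hβ
        obtain ⟨rfl, hγ⟩ := hγ
        exact ih hβ hγ (fun h => h₁ ⟨rfl, List.cons_prefix_cons.2 ⟨rfl, h.2⟩⟩)
          (fun h => h₂ ⟨rfl, List.cons_prefix_cons.2 ⟨rfl, h.2⟩⟩)
      · rfl

theorem lpaMonomial_mul_lpaMonomial (hβ : G.IsPath b β u) (hγ : G.IsPath a γ w)
    (α δ : List G.E) :
    lpaMonomial K G α u β * lpaMonomial K G γ w δ = 0 ∨
      (∃ τ, G.IsPath u τ w ∧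
        lpaMonomial K G α u β * lpaMonomial K G γ w δ = lpaMonomial K G (α ++ τ) w δ) ∨
      (∃ τ, G.IsPath w τ u ∧
        lpaMonomial K G α u β * lpaMonomial K G γ w δ = lpaMonomial K G α u (δ ++ τ)) := by
  by_cases h₁ : PointedPrefix (b, β) (a, γ)
  · obtain ⟨rfl : b = a, τ, rfl⟩ := h₁
    obtain ⟨u', hβ', hτ⟩ := isPath_append.1 hγ
    obtain rfl := hβ.unique hβ'
    exact Or.inr (Or.inl ⟨τ, hτ, lpaMonomial_mul_lpaMonomial_append hβ hτ α δ⟩)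
  by_cases h₂ : PointedPrefix (a, γ) (b, β)
  · obtain ⟨rfl : a = b, τ, rfl⟩ := h₂
    obtain ⟨w', hγ', hτ⟩ := isPath_append.1 hβ
    obtain rfl := hγ.unique hγ'
    exact Or.inr (Or.inr ⟨τ, hτ, lpaMonomial_append_mul_lpaMonomial hγ hτ α δ⟩)
  exact Or.inl (lpaMonomial_mul_lpaMonomial_eq_zero hβ hγ h₁ h₂ α δ)

variable {H : Set G.V}

theorem mul_mem_span_lpaMonomials (hH : G.IsHereditary H) {m m' : LPA K G}
    (hm : m ∈ lpaMonomials K G H) (hm' : m' ∈ lpaMonomials K G Set.univ) :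
    m * m' ∈ Submodule.span K (lpaMonomials K G H) ∧
      m' * m ∈ Submodule.span K (lpaMonomials K G H) := by
  obtain ⟨a, b, u, α, β, hu, hα, hβ, rfl⟩ := hm
  obtain ⟨c, d, w, γ, δ, -, hγ, hδ, rfl⟩ := hm'
  constructor
  · rcases lpaMonomial_mul_lpaMonomial (K := K) hβ hγ α δ with h | ⟨τ, hτ, h⟩ | ⟨τ, hτ, h⟩ <;>
      rw [h]
    · exact Submodule.zero_mem _
    · exact Submodule.subset_span
        ⟨a, d, w, α ++ τ, δ, hH.mem_of_reaches hu hτ.reaches, hα.append hτ, hδ, rfl⟩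
    · exact Submodule.subset_span ⟨a, d, u, α, δ ++ τ, hu, hα, hδ.append hτ, rfl⟩
  · rcases lpaMonomial_mul_lpaMonomial (K := K) hδ hα γ β with h | ⟨τ, hτ, h⟩ | ⟨τ, hτ, h⟩ <;>
      rw [h]
    · exact Submodule.zero_mem _
    · exact Submodule.subset_span ⟨c, b, u, γ ++ τ, β, hu, hγ.append hτ, hβ, rfl⟩
    · exact Submodule.subset_span
        ⟨c, b, w, γ, β ++ τ, hH.mem_of_reaches hu hτ.reaches, hγ, hβ.append hτ, rfl⟩

theorem mkRingHom_ι_mem_lpaMonomials (g : LPAGen G) :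
    RingQuot.mkRingHom (LPARel K G) (FreeAlgebra.ι K g) ∈ lpaMonomials K G Set.univ := by
  cases g with
  | vertex v =>
    exact ⟨v, v, v, [], [], trivial, rfl, rfl, by simp [lpaMonomial, lpaPath, lpaGhostPath]; rfl⟩
  | edge e =>
    refine ⟨G.src e, G.tgt e, G.tgt e, [e], [], trivial, ⟨rfl, rfl⟩, rfl, ?_⟩
    exact (lpaEdge_mul_lpaVtx_tgt e).symm.trans (by simp [lpaMonomial, lpaPath, lpaGhostPath])
  | ghost e =>
    refine ⟨G.tgt e, G.src e, G.tgt e, [], [e], trivial, rfl, ⟨rfl, rfl⟩, ?_⟩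
    exact (lpaVtx_tgt_mul_lpaGhost e).symm.trans (by simp [lpaMonomial, lpaPath, lpaGhostPath])

end Monomials

section Ideals

open DGraph

variable {K : Type} [Field K] {G : DGraph} {H : Set G.V}

theorem mem_span_lpaMonomials_of_mem_span (hH : G.IsHereditary H) {x : LPA K G}
    (hx : x ∈ TwoSidedIdeal.span (lpaVtx K G '' H)) :
    x ∈ Submodule.span K (lpaMonomials K G H) := by
  set S := Submodule.span K (lpaMonomials K G H)
  have hgen (g : LPAGen G) (s : LPA K G) (hs : s ∈ S) :
      RingQuot.mkRingHom (LPARel K G) (FreeAlgebra.ι K g) * s ∈ S ∧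
        s * RingQuot.mkRingHom (LPARel K G) (FreeAlgebra.ι K g) ∈ S := by
    induction hs using Submodule.span_induction with
    | mem m hm => exact (mul_mem_span_lpaMonomials hH hm (mkRingHom_ι_mem_lpaMonomials g)).symm
    | zero => simp
    | add p q _ _ hp hq => rw [mul_add, add_mul]; exact ⟨S.add_mem hp.1 hq.1, S.add_mem hp.2 hq.2⟩
    | smul c p _ hp =>
      rw [mul_smul_comm, smul_mul_assoc]; exact ⟨S.smul_mem c hp.1, S.smul_mem c hp.2⟩
  let I : TwoSidedIdeal (LPA K G) := .mk' S S.zero_mem S.add_mem S.neg_mem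
    (RingQuot.mul_mem_of_forall_ι_mul_mem (fun g s hs => (hgen g s hs).1) _)
    (RingQuot.mul_mem_of_forall_mul_ι_mem (fun g s hs => (hgen g s hs).2) _)
  have hvtx : lpaVtx K G '' H ⊆ I := by
    rintro _ ⟨v, hv, rfl⟩
    exact Submodule.subset_span
      ⟨v, v, v, [], [], hv, rfl, rfl, by simp [lpaMonomial, lpaPath, lpaGhostPath]⟩
  simpa [I] using TwoSidedIdeal.mem_span_iff.mp hx I hvtx

end Ideals

section LocalUnits

open DGraph

variable {K : Type} [Field K] {G : DGraph} {H : Set G.V}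

/-- The projections `π π*` onto the prefix-minimal paths `π` of `Q` are pairwise orthogonal, and
every path of `Q` has exactly one of them as a prefix. -/
theorem exists_left_unit_lpaMonomials (Q : Finset (G.V × List G.E))
    (hQ : ∀ p ∈ Q, ∃ v ∈ H, G.IsPath p.1 p.2 v) :
    ∃ e ∈ Submodule.span K (lpaMonomials K G H), ∀ (a v : G.V) (α β : List G.E),
      (a, α) ∈ Q → G.IsPath a α v → e * lpaMonomial K G α v β = lpaMonomial K G α v β := by
  have hend (p) (hp : p ∈ Q) : G.IsPath p.1 p.2 (G.pathEnd p.1 p.2) := by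
    obtain ⟨v, -, h⟩ := hQ p hp
    rwa [h.pathEnd_eq]
  refine ⟨∑ p ∈ minimalPrefixes Q, lpaMonomial K G p.2 (G.pathEnd p.1 p.2) p.2,
    Submodule.sum_mem _ fun p hp => ?_, fun a v α β hq hα => ?_⟩
  · obtain ⟨v, hv, h⟩ := hQ p (minimalPrefixes_subset hp)
    rw [h.pathEnd_eq]
    exact Submodule.subset_span ⟨p.1, p.1, v, p.2, p.2, hv, h, h, rfl⟩
  obtain ⟨p, hp, hpq⟩ := exists_mem_minimalPrefixes hq
  rw [Finset.sum_mul, Finset.sum_eq_single_of_mem p hp fun p' hp' hne => ?_]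
  · obtain ⟨c, π⟩ := p
    obtain ⟨rfl : c = a, τ, rfl⟩ := hpq
    obtain ⟨u, hπ, hτ⟩ := isPath_append.1 hα
    rw [hπ.pathEnd_eq]
    exact lpaMonomial_mul_lpaMonomial_append hπ hτ π β
  · obtain ⟨h₁, h₂⟩ := not_pointedPrefix_of_mem_minimalPrefixes hp hp' hq hpq hne
    exact lpaMonomial_mul_lpaMonomial_eq_zero (hend p' (minimalPrefixes_subset hp')) hα h₁ h₂ _ _

theorem exists_mul_eq_self_of_mem_span_lpaMonomials {x : LPA K G}
    (hx : x ∈ Submodule.span K (lpaMonomials K G H)) :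
    ∃ e ∈ Submodule.span K (lpaMonomials K G H), e * x = x := by
  classical
  obtain ⟨T, hT, hxT⟩ := Submodule.mem_span_finite_of_mem_span hx
  have hdata (m : T) : ∃ (a v : G.V) (α β : List G.E),
      v ∈ H ∧ G.IsPath a α v ∧ (m : LPA K G) = lpaMonomial K G α v β := by
    obtain ⟨a, -, v, α, β, hv, hα, -, hm⟩ := hT m.2
    exact ⟨a, v, α, β, hv, hα, hm⟩
  choose a v α β hv hα hm using hdata
  obtain ⟨e, he, hunit⟩ := exists_left_unit_lpaMonomials (K := K)
    (Finset.univ.image fun m => (a m, α m)) fun p hp => by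
      obtain ⟨m, -, rfl⟩ := Finset.mem_image.1 hp
      exact ⟨v m, hv m, hα m⟩
  refine ⟨e, he, ?_⟩
  clear hx
  induction hxT using Submodule.span_induction with
  | mem m hmT =>
    have hm' : m = lpaMonomial K G _ _ _ := hm ⟨m, hmT⟩
    rw [hm']
    exact hunit _ _ _ _ (Finset.mem_image_of_mem _ (Finset.mem_univ _)) (hα _)
  | zero => exact mul_zero e
  | add y z _ _ hy hz => rw [mul_add, hy, hz]
  | smul c y _ hy => rw [mul_smul_comm, hy]

end LocalUnits

section Annihilation

open DGraph

variable {K : Type} [Field K] {G : DGraph} {H H' : Set G.V}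

theorem mul_eq_zero_of_mem_lpaMonomials
    (hHH' : ∀ u ∈ H, ∀ w ∈ H', ¬G.Reaches u w ∧ ¬G.Reaches w u) {m m' : LPA K G}
    (hm : m ∈ lpaMonomials K G H) (hm' : m' ∈ lpaMonomials K G H') : m * m' = 0 := by
  obtain ⟨a, b, u, α, β, hu, hα, hβ, rfl⟩ := hm
  obtain ⟨c, d, w, γ, δ, hw, hγ, hδ, rfl⟩ := hm'
  rcases lpaMonomial_mul_lpaMonomial (K := K) hβ hγ α δ with h | ⟨τ, hτ, -⟩ | ⟨τ, hτ, -⟩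
  · exact h
  · exact ((hHH' u hu w hw).1 hτ.reaches).elim
  · exact ((hHH' u hu w hw).2 hτ.reaches).elim

theorem mul_eq_zero_of_mem_span_lpaMonomials
    (hHH' : ∀ u ∈ H, ∀ w ∈ H', ¬G.Reaches u w ∧ ¬G.Reaches w u) {x y : LPA K G}
    (hx : x ∈ Submodule.span K (lpaMonomials K G H))
    (hy : y ∈ Submodule.span K (lpaMonomials K G H')) : x * y = 0 := by
  have hbot :
      Submodule.span K (lpaMonomials K G H) * Submodule.span K (lpaMonomials K G H') = ⊥ := by
    rw [Submodule.span_mul_span, Submodule.span_eq_bot]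
    rintro _ ⟨m, hm, m', hm', rfl⟩
    exact mul_eq_zero_of_mem_lpaMonomials hHH' hm hm'
  simpa [hbot] using Submodule.mul_mem_mul hx hy

end Annihilation

/-- In `L = L_K(E)`, the (two-sided) ideal `A` generated by the acyclic
vertices and the ideal `N` generated by the vertices on cycles without exits intersect
trivially: `A ∩ N = 0`. -/
theorem stmt12 (K : Type) [Field K] (G : DGraph) :
    ∀ x : LPA K G,
      x ∈ TwoSidedIdeal.span (lpaVtx K G '' {v : G.V | G.IsAcyclicVertex v}) →
      x ∈ TwoSidedIdeal.span (lpaVtx K G ''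
        {v : G.V | ∃ c : List G.E, G.IsCycle c ∧ v ∈ c.map G.src ∧ G.NoExit c}) →
      x = 0 := by
  intro x hA hN
  have hxA := mem_span_lpaMonomials_of_mem_span G.isHereditary_isAcyclicVertex hA
  have hxN := mem_span_lpaMonomials_of_mem_span G.isHereditary_noExitCycleVertex hN
  obtain ⟨e, he, hex⟩ := exists_mul_eq_self_of_mem_span_lpaMonomials hxN
  rw [← hex]
  exact mul_eq_zero_of_mem_span_lpaMonomials
    (fun w hw v hv => ⟨DGraph.NoExitCycleVertex.not_reaches hw hv,
      DGraph.IsAcyclicVertex.not_reaches hv hw⟩) he hxA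
end

section
/- Let E be an arbitrary directed graph, K a field, L = L_K(E), and v a vertex of E. If the corner vLv is von Neumann regular, then T_E(v) contains no cycles. -/
/-!
Suppose `v` reaches a vertex `w` on a cycle. Choose a path `μ` from `v` to `w` and a closed path `c`
of length `n > 0` at `w`, and put `α = μ c μ*`, so that `v α = α = α v`. Since
`c*ᵏ μ* αᵏ μ = w` and `w ≠ 0` (it fixes the infinite path `c c c ⋯` in the Chen module), `α` is
not nilpotent. The `ℤ`-grading of `L` is the algebra map `L → L[ℤ]` sending each generator `g` to
`single (deg g) g`; it sends `γ = v + α` to `single 0 v + single n α`. Such an element of `L[ℤ]`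
is never von Neumann regular: comparing lowest-degree coefficients, `γ y γ = γ` with `y` in the
corner forces `γ y = v`, and then the coefficient of `y` in degree `kn` is `(-α)ᵏ v ≠ 0` for
every `k`, so `y` would have infinite support.
-/

namespace Finsupp

variable {M : Type*} [Zero M]

theorem exists_apply_add_mul_eq_zero (f : ℤ →₀ M) {n : ℤ} (hn : n ≠ 0) (m : ℤ) :
    ∃ k : ℕ, f (m + k * n) = 0 := by
  by_contra! h
  have hinj : Function.Injective fun k : ℕ => m + k * n := fun k l hkl => by
    simpa [hn] using hkl
  exact Set.infinite_of_injective_forall_mem hinj (fun k => mem_support_iff.mpr (h k))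
    f.support.finite_toSet

theorem apply_eq_zero_of_apply_sub_eq_zero (f : ℤ →₀ M) {n : ℤ} (hn : n ≠ 0) {S : Set ℤ}
    (hS : ∀ m ∈ S, m - n ∈ S) (h : ∀ m ∈ S, f (m - n) = 0 → f m = 0) :
    ∀ m ∈ S, f m = 0 := by
  intro m hm
  by_contra hfm
  have key : ∀ k : ℕ, m - k * n ∈ S ∧ f (m - k * n) ≠ 0 := by
    intro k
    induction k with
    | zero => simpa using ⟨hm, hfm⟩
    | succ k ih =>
      have hsub : m - ((k + 1 : ℕ) : ℤ) * n = m - k * n - n := by push_cast; ring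
      rw [hsub]
      exact ⟨hS _ ih.1, fun h0 => ih.2 (h _ ih.1 h0)⟩
  obtain ⟨k, hk⟩ := f.exists_apply_add_mul_eq_zero (neg_ne_zero.mpr hn) m
  exact (key k).2 (by simpa [sub_eq_add_neg] using hk)

end Finsupp

namespace AddMonoidAlgebra

variable {R : Type*} [Ring R] {e a : R} {n : ℤ}

theorem eq_zero_of_mul_single_add_single_eq_zero (hn : n ≠ 0) {z : R[ℤ]}
    (hz : z * single 0 e = z) (h : z * (single 0 e + single n a) = 0) : z = 0 := by
  have hze : ∀ m, z.coeff m * e = z.coeff m := fun m => by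
    simpa only [coeff_mul_single_apply, neg_zero, add_zero] using congrArg (·.coeff m) hz
  have hrec : ∀ m, z.coeff m + z.coeff (m - n) * a = 0 := fun m => by
    simpa only [mul_add, coeff_add, Finsupp.add_apply, coeff_mul_single_apply, neg_zero,
      add_zero, hze, ← sub_eq_add_neg, coeff_zero, Finsupp.zero_apply] using congrArg (·.coeff m) h
  ext m
  refine z.coeff.apply_eq_zero_of_apply_sub_eq_zero hn (S := Set.univ) (by simp) ?_ m trivial
  intro m _ h0
  simpa [h0] using hrec m

theorem single_add_single_mul_ne_single (hn : 0 < n) (hea : e * a = a) (ha : ¬ IsNilpotent a)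
    {q : R[ℤ]} (hq : single 0 e * q = q) :
    (single 0 e + single n a) * q ≠ single 0 e := by
  intro h
  have heq : ∀ m, e * q.coeff m = q.coeff m := fun m => by
    simpa only [coeff_single_mul_apply, neg_zero, zero_add] using congrArg (·.coeff m) hq
  have hrec : ∀ m, q.coeff m + a * q.coeff (m - n) = if m = 0 then e else 0 := fun m => by
    have := congrArg (·.coeff m) h
    simp only [add_mul, coeff_add, Finsupp.add_apply, coeff_single_mul_apply, neg_zero,
      zero_add, heq, coeff_single, Finsupp.single_apply] at this
    rw [neg_add_eq_sub] at this
    simpa only [eq_comm (a := (0 : ℤ))] using this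
  have hneg : ∀ m ∈ Set.Iio (0 : ℤ), q.coeff m = 0 :=
    q.coeff.apply_eq_zero_of_apply_sub_eq_zero hn.ne' (fun m hm => by simp at hm ⊢; omega)
      fun m hm h0 => by simpa [h0, (Set.mem_Iio.mp hm).ne] using hrec m
  have hpow : ∀ k : ℕ, q.coeff (k * n) = (-a) ^ k * e := by
    intro k
    induction k with
    | zero => simpa [hneg (-n) (by simpa using hn)] using hrec 0
    | succ k ih =>
      have hk := hrec ((k + 1 : ℕ) * n)
      rw [if_neg (by positivity), show ((k + 1 : ℕ) : ℤ) * n - n = k * n by push_cast; ring,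
        ih] at hk
      rw [eq_neg_of_add_eq_zero_left hk, pow_succ', mul_assoc, neg_mul]
  have hne : ∀ k : ℕ, (-a) ^ k * e ≠ 0 := fun k h0 => by
    refine ha (isNilpotent_neg_iff.mp ⟨k + 1, ?_⟩)
    calc (-a) ^ (k + 1) = (-a) ^ k * e * -a := by rw [mul_assoc, mul_neg, hea, pow_succ]
      _ = 0 := by rw [h0, zero_mul]
  obtain ⟨k, hk⟩ := q.coeff.exists_apply_add_mul_eq_zero hn.ne' 0
  exact hne k (by simpa [hpow] using hk)

theorem single_add_single_mul_mul_ne (he : IsIdempotentElem e) (hea : e * a = a)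
    (hae : a * e = a) (ha : ¬ IsNilpotent a) (hn : 0 < n) (y : R[ℤ]) :
    (single 0 e + single n a) * y * (single 0 e + single n a) ≠ single 0 e + single n a := by
  set E : R[ℤ] := single 0 e
  set Γ : R[ℤ] := E + single n a
  have hEE : E * E = E := by rw [single_mul_single, add_zero, he.eq]
  have hEΓ : E * Γ = Γ := by rw [mul_add, hEE, single_mul_single, zero_add, hea]
  have hΓE : Γ * E = Γ := by rw [add_mul, hEE, single_mul_single, add_zero, hae]
  intro h
  set y' := E * y * E
  have hy' : Γ * y' * Γ = Γ := by
    rw [show Γ * y' * Γ = Γ * E * y * (E * Γ) by simp only [y', mul_assoc], hΓE, hEΓ, h]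
  have hright : Γ * y' = E := by
    refine (sub_eq_zero.mp
      (eq_zero_of_mul_single_add_single_eq_zero (e := e) (a := a) hn.ne' ?_ ?_)).symm
    · rw [sub_mul, hEE, mul_assoc, mul_assoc, hEE]
    · rw [sub_mul, hEΓ, hy', sub_self]
  have hEy' : E * y' = y' := by simp only [y', ← mul_assoc, hEE]
  exact single_add_single_mul_ne_single hn hea ha hEy' hright

end AddMonoidAlgebra

section PartialEnd

variable (K : Type*) [Semiring K] {X : Type*}

noncomputable def partialEnd (φ : X → Option X) : Module.End K (X →₀ K) :=
  Finsupp.lift (X →₀ K) K X fun x => (φ x).elim 0 (Finsupp.single · 1)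

variable {K}

theorem partialEnd_single (φ : X → Option X) (x : X) :
    partialEnd K φ (Finsupp.single x 1) = (φ x).elim 0 (Finsupp.single · 1) := by
  simp [partialEnd]

theorem partialEnd_mul (φ ψ : X → Option X) :
    partialEnd K φ * partialEnd K ψ = partialEnd K fun x => (ψ x).bind φ := by
  ext x : 2
  simp only [LinearMap.comp_apply, Finsupp.lsingle_apply, Module.End.mul_apply, partialEnd_single]
  cases ψ x <;> simp [partialEnd_single]

theorem partialEnd_none : partialEnd K (fun _ : X => none) = 0 := by
  ext x : 2
  simp [partialEnd_single]

end PartialEnd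

namespace DGraph

variable {G : DGraph}

def Adj (G : DGraph) (a b : G.V) : Prop := ∃ e : G.E, G.src e = a ∧ G.tgt e = b

theorem IsCycle.transGen_adj_self {c : List G.E} (hc : G.IsCycle c) {w : G.V}
    (hw : w ∈ c.map G.src) : Relation.TransGen G.Adj w w := by
  obtain ⟨hne, hchain, hclosed, -⟩ := hc
  obtain ⟨e, l, rfl⟩ := List.exists_cons_of_ne_nil hne
  have hto : ∀ f ∈ e :: l, Relation.TransGen G.Adj (G.src f) (G.src e) := by
    refine hchain.backwards_induction _ _ (fun f g hfg h => .head ⟨f, rfl, hfg⟩ h) fun hl => ?_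
    rw [List.getLast?_eq_some_getLast hl] at hclosed
    exact .single ⟨_, rfl, Option.some.inj hclosed⟩
  have hfrom : ∀ f ∈ e :: l, G.Reaches (G.src e) (G.src f) :=
    hchain.induction _ _ (fun f g hfg h => h.tail ⟨f, rfl, hfg⟩) fun _ => .refl
  obtain ⟨f, hf, rfl⟩ := List.mem_map.mp hw
  exact (hto f hf).trans_left (hfrom f hf)

theorem exists_isInfPath_of_transGen {w : G.V} (hw : Relation.TransGen G.Adj w w) :
    ∃ p : ℕ → G.E, G.IsInfPath p ∧ G.src (p 0) = w := by
  have hnext : ∀ u : {u // Relation.TransGen G.Adj u w},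
      ∃ e : G.E, G.src e = u ∧ Relation.TransGen G.Adj (G.tgt e) w := by
    rintro ⟨u, hu⟩
    obtain ⟨b, ⟨e, rfl, rfl⟩, hb⟩ := Relation.TransGen.head'_iff.mp hu
    rcases Relation.reflTransGen_iff_eq_or_transGen.mp hb with h | h
    · exact ⟨e, rfl, h ▸ hw⟩
    · exact ⟨e, rfl, h⟩
  choose f hf using hnext
  let next : {u // Relation.TransGen G.Adj u w} → {u // Relation.TransGen G.Adj u w} :=
    fun u => ⟨G.tgt (f u), (hf u).2⟩
  refine ⟨fun k => f (next^[k] ⟨w, hw⟩), fun k => ?_, (hf _).1⟩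
  rw [(hf _).1, Function.iterate_succ_apply']

abbrev InfPath (G : DGraph) : Type := {p : ℕ → G.E // G.IsInfPath p}

def InfPath.cons (e : G.E) (p : G.InfPath) (h : G.tgt e = G.src (p.1 0)) : G.InfPath :=
  ⟨fun | 0 => e | k + 1 => p.1 k, fun | 0 => h | k + 1 => p.2 k⟩

def InfPath.tail (p : G.InfPath) : G.InfPath := ⟨fun k => p.1 (k + 1), fun k => p.2 (k + 1)⟩

@[simp]
theorem InfPath.cons_val_zero (e : G.E) (p : G.InfPath) (h : G.tgt e = G.src (p.1 0)) :
    (p.cons e h).1 0 = e := rfl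

@[simp]
theorem InfPath.src_tail_val_zero (p : G.InfPath) : G.src (p.tail.1 0) = G.tgt (p.1 0) :=
  (p.2 0).symm

theorem InfPath.cons_tail (p : G.InfPath) : p.tail.cons (p.1 0) (p.2 0) = p := by
  apply Subtype.ext
  funext k
  cases k <;> rfl

theorem InfPath.tail_cons (e : G.E) (p : G.InfPath) (h : G.tgt e = G.src (p.1 0)) :
    (p.cons e h).tail = p := rfl

open Classical in
noncomputable def chenMap : LPAGen G → G.InfPath → Option G.InfPath
  | .vertex w, p => if G.src (p.1 0) = w then some p else none
  | .edge e, p => if h : G.tgt e = G.src (p.1 0) then some (p.cons e h) else none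
  | .ghost e, p => if p.1 0 = e then some p.tail else none

end DGraph

section LeavittPathAlgebra

variable (K : Type) [Field K] (G : DGraph)

noncomputable def lpaGen (g : LPAGen G) : LPA K G :=
  RingQuot.mkAlgHom K (LPARel K G) (FreeAlgebra.ι K g)

variable {K G}

theorem lpaVtx_eq_lpaGen (v : G.V) : lpaVtx K G v = lpaGen K G (.vertex v) := by
  rw [lpaVtx, lpaGen, ← RingQuot.mkAlgHom_coe K]
  rfl

theorem lpaGen_mul_lpaGen_of_rel {g h : LPAGen G} {x : FreeAlgebra K (LPAGen G)}
    (hr : LPARel K G (FreeAlgebra.ι K g * FreeAlgebra.ι K h) x) :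
    lpaGen K G g * lpaGen K G h = RingQuot.mkAlgHom K (LPARel K G) x := by
  rw [lpaGen, lpaGen, ← map_mul, RingQuot.mkAlgHom_rel K hr]

theorem isIdempotentElem_lpaVtx (v : G.V) : IsIdempotentElem (lpaVtx K G v) := by
  rw [IsIdempotentElem, lpaVtx_eq_lpaGen, lpaGen_mul_lpaGen_of_rel (.vtx v v), if_pos rfl, lpaGen]

theorem lpaVtx_src_mul_edge (e : G.E) :
    lpaVtx K G (G.src e) * lpaGen K G (.edge e) = lpaGen K G (.edge e) := by
  rw [lpaVtx_eq_lpaGen, lpaGen_mul_lpaGen_of_rel (.src_edge e), lpaGen]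

theorem edge_mul_lpaVtx_tgt (e : G.E) :
    lpaGen K G (.edge e) * lpaVtx K G (G.tgt e) = lpaGen K G (.edge e) := by
  rw [lpaVtx_eq_lpaGen, lpaGen_mul_lpaGen_of_rel (.edge_tgt e), lpaGen]

theorem ghost_mul_lpaVtx_src (e : G.E) :
    lpaGen K G (.ghost e) * lpaVtx K G (G.src e) = lpaGen K G (.ghost e) := by
  rw [lpaVtx_eq_lpaGen, lpaGen_mul_lpaGen_of_rel (.ghost_src e), lpaGen]

theorem ghost_mul_edge_self (e : G.E) :
    lpaGen K G (.ghost e) * lpaGen K G (.edge e) = lpaVtx K G (G.tgt e) := by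
  rw [lpaVtx_eq_lpaGen, lpaGen_mul_lpaGen_of_rel (.ck1 e e), if_pos rfl, lpaGen]

end LeavittPathAlgebra

def LPAGen.deg {G : DGraph} : LPAGen G → ℤ
  | .vertex _ => 0
  | .edge _ => 1
  | .ghost _ => -1

section Grading

open AddMonoidAlgebra

variable (K : Type) [Field K] (G : DGraph)

noncomputable def lpaGradingAux : FreeAlgebra K (LPAGen G) →ₐ[K] (LPA K G)[ℤ] :=
  FreeAlgebra.lift K fun g => single g.deg (lpaGen K G g)

variable {K G}

def IsLPAHomogeneous (d : ℤ) (x : FreeAlgebra K (LPAGen G)) : Prop :=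
  lpaGradingAux K G x = single d (RingQuot.mkAlgHom K (LPARel K G) x)

theorem isLPAHomogeneous_ι (g : LPAGen G) : IsLPAHomogeneous (K := K) g.deg (FreeAlgebra.ι K g) := by
  rw [IsLPAHomogeneous, lpaGradingAux, FreeAlgebra.lift_ι_apply, lpaGen]

theorem isLPAHomogeneous_zero (d : ℤ) : IsLPAHomogeneous (K := K) (G := G) d 0 := by
  rw [IsLPAHomogeneous, map_zero, map_zero, single_zero]

theorem IsLPAHomogeneous.mul {d d' : ℤ} {x y : FreeAlgebra K (LPAGen G)} (hx : IsLPAHomogeneous d x)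
    (hy : IsLPAHomogeneous d' y) : IsLPAHomogeneous (d + d') (x * y) := by
  rw [IsLPAHomogeneous, map_mul, hx, hy, single_mul_single, map_mul]

theorem IsLPAHomogeneous.sum {ι : Type*} {d : ℤ} (s : Finset ι) {x : ι → FreeAlgebra K (LPAGen G)}
    (hx : ∀ i ∈ s, IsLPAHomogeneous d (x i)) : IsLPAHomogeneous d (∑ i ∈ s, x i) := by
  rw [IsLPAHomogeneous, map_sum, map_sum, Finset.sum_congr rfl hx]
  exact (map_sum (singleAddHom d) _ s).symm

theorem LPARel.exists_isLPAHomogeneous {x y : FreeAlgebra K (LPAGen G)} (h : LPARel K G x y) :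
    ∃ d, IsLPAHomogeneous d x ∧ IsLPAHomogeneous d y := by
  have ι_mul (g g' : LPAGen G) := (isLPAHomogeneous_ι (K := K) g).mul (isLPAHomogeneous_ι g')
  cases h with
  | vtx u w => exact ⟨0, by simpa [LPAGen.deg] using ι_mul (.vertex u) (.vertex w),
      by split_ifs; exacts [isLPAHomogeneous_ι _, isLPAHomogeneous_zero _]⟩
  | src_edge e => exact ⟨1, by simpa [LPAGen.deg] using ι_mul (.vertex (G.src e)) (.edge e),
      isLPAHomogeneous_ι (.edge e)⟩
  | edge_tgt e => exact ⟨1, by simpa [LPAGen.deg] using ι_mul (.edge e) (.vertex (G.tgt e)),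
      isLPAHomogeneous_ι (.edge e)⟩
  | tgt_ghost e => exact ⟨-1, by simpa [LPAGen.deg] using ι_mul (.vertex (G.tgt e)) (.ghost e),
      isLPAHomogeneous_ι (.ghost e)⟩
  | ghost_src e => exact ⟨-1, by simpa [LPAGen.deg] using ι_mul (.ghost e) (.vertex (G.src e)),
      isLPAHomogeneous_ι (.ghost e)⟩
  | ck1 e f => exact ⟨0, by simpa [LPAGen.deg] using ι_mul (.ghost e) (.edge f),
      by split_ifs; exacts [isLPAHomogeneous_ι _, isLPAHomogeneous_zero _]⟩
  | ck2 v _ _ => exact ⟨0, isLPAHomogeneous_ι (.vertex v),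
      IsLPAHomogeneous.sum _ fun e _ => by simpa [LPAGen.deg] using ι_mul (.edge e) (.ghost e)⟩

variable (K G)

noncomputable def lpaGrading : LPA K G →ₐ[K] (LPA K G)[ℤ] :=
  RingQuot.liftAlgHom K ⟨lpaGradingAux K G, fun x y h => by
    obtain ⟨d, hx, hy⟩ := h.exists_isLPAHomogeneous
    rw [hx, hy, RingQuot.mkAlgHom_rel K h]⟩

variable {K G}

theorem lpaGrading_lpaGen (g : LPAGen G) :
    lpaGrading K G (lpaGen K G g) = single g.deg (lpaGen K G g) := by
  rw [lpaGrading, lpaGen, RingQuot.liftAlgHom_mkAlgHom_apply, isLPAHomogeneous_ι]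

theorem lpaGrading_lpaVtx (v : G.V) :
    lpaGrading K G (lpaVtx K G v) = single 0 (lpaVtx K G v) := by
  rw [lpaVtx_eq_lpaGen, lpaGrading_lpaGen, LPAGen.deg]

end Grading

section ChenModule

open DGraph

variable (K : Type) [Field K] (G : DGraph)

noncomputable def chenReprAux : FreeAlgebra K (LPAGen G) →ₐ[K] Module.End K (G.InfPath →₀ K) :=
  FreeAlgebra.lift K fun g => partialEnd K (chenMap g)

theorem chenReprAux_ck2 (v : G.V) (hfin : {e : G.E | G.src e = v}.Finite) :
    chenReprAux K G (FreeAlgebra.ι K (.vertex v)) = chenReprAux K G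
      (∑ e ∈ hfin.toFinset, FreeAlgebra.ι K (.edge e) * FreeAlgebra.ι K (.ghost e)) := by
  classical
  simp only [chenReprAux, map_sum, map_mul, FreeAlgebra.lift_ι_apply, partialEnd_mul]
  have hterm (e : G.E) : (fun p => (chenMap (.ghost e) p).bind (chenMap (.edge e))) =
      fun p => if p.1 0 = e then some p else none := by
    funext p
    by_cases hp : p.1 0 = e
    · subst hp
      simp [chenMap, InfPath.cons_tail]
    · simp [chenMap, hp]
  rw [Finset.sum_congr rfl fun e _ => congrArg (partialEnd K) (hterm e)]
  ext p : 2
  simp only [LinearMap.comp_apply, Finsupp.lsingle_apply, LinearMap.sum_apply,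
    partialEnd_single, chenMap]
  have hcase (c : Prop) [Decidable c] : (if c then some p else none).elim 0
      (Finsupp.single · (1 : K)) = if c then Finsupp.single p 1 else 0 := by
    split_ifs <;> rfl
  simp only [hcase, Finset.sum_ite_eq, Set.Finite.mem_toFinset, Set.mem_ofPred_eq]

theorem chenReprAux_rel {x y : FreeAlgebra K (LPAGen G)} (h : LPARel K G x y) :
    chenReprAux K G x = chenReprAux K G y := by
  cases h with
  | vtx u w =>
    simp only [chenReprAux, map_mul, FreeAlgebra.lift_ι_apply, partialEnd_mul]
    split_ifs with huw
    · rw [FreeAlgebra.lift_ι_apply]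
      congr 1; funext p
      by_cases hp : G.src (p.1 0) = w <;> simp [chenMap, hp, huw]
    · rw [map_zero, ← partialEnd_none]
      congr 1; funext p
      by_cases hp : G.src (p.1 0) = w <;> simp [chenMap, hp, Ne.symm huw]
  | src_edge e =>
    simp only [chenReprAux, map_mul, FreeAlgebra.lift_ι_apply, partialEnd_mul]
    congr 1; funext p
    by_cases hp : G.tgt e = G.src (p.1 0) <;> simp [chenMap, hp]
  | edge_tgt e =>
    simp only [chenReprAux, map_mul, FreeAlgebra.lift_ι_apply, partialEnd_mul]
    congr 1; funext p
    by_cases hp : G.tgt e = G.src (p.1 0) <;> simp [chenMap, hp, eq_comm (a := G.src (p.1 0))]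
  | tgt_ghost e =>
    simp only [chenReprAux, map_mul, FreeAlgebra.lift_ι_apply, partialEnd_mul]
    congr 1; funext p
    by_cases hp : p.1 0 = e <;> simp [chenMap, hp]
  | ghost_src e =>
    simp only [chenReprAux, map_mul, FreeAlgebra.lift_ι_apply, partialEnd_mul]
    congr 1; funext p
    by_cases hp : p.1 0 = e <;> simp [chenMap, hp]
  | ck1 e f =>
    simp only [chenReprAux, map_mul, FreeAlgebra.lift_ι_apply, partialEnd_mul]
    split_ifs with hef
    · subst hef
      rw [FreeAlgebra.lift_ι_apply]
      congr 1; funext p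
      by_cases hp : G.tgt e = G.src (p.1 0) <;>
        simp [chenMap, hp, InfPath.tail_cons, eq_comm (a := G.src (p.1 0))]
    · rw [map_zero, ← partialEnd_none]
      congr 1; funext p
      by_cases hp : G.tgt f = G.src (p.1 0) <;> simp [chenMap, hp, Ne.symm hef]
  | ck2 v hfin _ => exact chenReprAux_ck2 K G v hfin

noncomputable def chenRepr : LPA K G →ₐ[K] Module.End K (G.InfPath →₀ K) :=
  RingQuot.liftAlgHom K ⟨chenReprAux K G, fun _ _ => chenReprAux_rel K G⟩

variable {K G}

theorem lpaVtx_ne_zero_of_isInfPath {w : G.V} {p : ℕ → G.E} (hp : G.IsInfPath p)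
    (hw : G.src (p 0) = w) : lpaVtx K G w ≠ 0 := by
  intro h0
  have hfix :
      chenRepr K G (lpaVtx K G w) (Finsupp.single ⟨p, hp⟩ 1) = Finsupp.single ⟨p, hp⟩ 1 := by
    rw [lpaVtx_eq_lpaGen, chenRepr, lpaGen, RingQuot.liftAlgHom_mkAlgHom_apply, chenReprAux,
      FreeAlgebra.lift_ι_apply, partialEnd_single]
    simp [chenMap, hw]
  rw [h0, map_zero, LinearMap.zero_apply] at hfix
  exact one_ne_zero (Finsupp.single_eq_zero.mp hfix.symm)

end ChenModule

section PathPair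

open AddMonoidAlgebra

variable {K : Type} [Field K] {G : DGraph}

/-- The properties of the monomial `x = μ` of a path `μ` from `u` to `w` of length `d` and of
`x' = μ*` that the argument uses. -/
structure IsPathPair (u w : G.V) (d : ℕ) (x x' : LPA K G) : Prop where
  vtx_mul : lpaVtx K G u * x = x
  mul_vtx : x * lpaVtx K G w = x
  ghost_mul_vtx : x' * lpaVtx K G u = x'
  ghost_mul : x' * x = lpaVtx K G w
  grading : lpaGrading K G x = single (d : ℤ) x
  grading_ghost : lpaGrading K G x' = single (-d : ℤ) x'

namespace IsPathPair

variable {u w t : G.V} {d d' : ℕ} {x x' y y' : LPA K G}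

theorem vertex (u : G.V) : IsPathPair u u 0 (lpaVtx K G u) (lpaVtx K G u) := by
  have hu := (isIdempotentElem_lpaVtx (K := K) u).eq
  exact ⟨hu, hu, hu, hu, lpaGrading_lpaVtx u, by simpa using lpaGrading_lpaVtx u⟩

theorem edge (e : G.E) :
    IsPathPair (G.src e) (G.tgt e) 1 (lpaGen K G (.edge e)) (lpaGen K G (.ghost e)) :=
  ⟨lpaVtx_src_mul_edge e, edge_mul_lpaVtx_tgt e, ghost_mul_lpaVtx_src e, ghost_mul_edge_self e,
    lpaGrading_lpaGen _, lpaGrading_lpaGen _⟩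

theorem comp (hx : IsPathPair u w d x x') (hy : IsPathPair w t d' y y') :
    IsPathPair u t (d + d') (x * y) (y' * x') where
  vtx_mul := by rw [← mul_assoc, hx.vtx_mul]
  mul_vtx := by rw [mul_assoc, hy.mul_vtx]
  ghost_mul_vtx := by rw [mul_assoc, hx.ghost_mul_vtx]
  ghost_mul := by rw [mul_assoc, ← mul_assoc x', hx.ghost_mul, hy.vtx_mul, hy.ghost_mul]
  grading := by rw [map_mul, hx.grading, hy.grading, single_mul_single]; push_cast; rfl
  grading_ghost := by
    rw [map_mul, hx.grading_ghost, hy.grading_ghost, single_mul_single]; push_cast; ring_nf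

theorem exists_of_reaches (h : G.Reaches u w) : ∃ d x x', IsPathPair (K := K) u w d x x' := by
  induction h using Relation.ReflTransGen.head_induction_on with
  | refl => exact ⟨0, _, _, vertex w⟩
  | head hab _ ih =>
    obtain ⟨e, rfl, rfl⟩ := hab
    obtain ⟨d, x, x', hx⟩ := ih
    exact ⟨_, _, _, (edge e).comp hx⟩

theorem exists_of_transGen (h : Relation.TransGen G.Adj u w) :
    ∃ d x x', 0 < d ∧ IsPathPair (K := K) u w d x x' := by
  obtain ⟨b, ⟨e, rfl, rfl⟩, hb⟩ := Relation.TransGen.head'_iff.mp h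
  obtain ⟨d, x, x', hx⟩ := exists_of_reaches (K := K) hb
  exact ⟨1 + d, _, _, by omega, (edge e).comp hx⟩

theorem vtx_mul_conj (hx : IsPathPair u w d x x') (y : LPA K G) :
    lpaVtx K G u * (x * y * x') = x * y * x' := by
  rw [← mul_assoc, ← mul_assoc, hx.vtx_mul]

theorem conj_mul_vtx (hx : IsPathPair u w d x x') (y : LPA K G) :
    x * y * x' * lpaVtx K G u = x * y * x' := by
  rw [mul_assoc, hx.ghost_mul_vtx]

theorem grading_conj (hx : IsPathPair u w d x x') (hy : IsPathPair w w d' y y') :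
    lpaGrading K G (x * y * x') = single (d' : ℤ) (x * y * x') := by
  rw [map_mul, map_mul, hx.grading, hy.grading, hx.grading_ghost, single_mul_single,
    single_mul_single]
  ring_nf

theorem ghost_mul_conj_pow_mul (hx : IsPathPair u w d x x') (hy : IsPathPair w w d' y y')
    (k : ℕ) : x' * (x * y * x') ^ k * x = lpaVtx K G w * y ^ k := by
  induction k with
  | zero => rw [pow_zero, mul_one, hx.ghost_mul, pow_zero, mul_one]
  | succ k ih =>
    calc x' * (x * y * x') ^ (k + 1) * x = x' * (x * y * x') ^ k * x * y * (x' * x) := by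
          simp only [pow_succ, mul_assoc]
      _ = lpaVtx K G w * y ^ (k + 1) := by
          rw [ih, hx.ghost_mul, mul_assoc _ y, hy.mul_vtx, mul_assoc, ← pow_succ]

theorem ghost_pow_mul_vtx_mul_pow (hy : IsPathPair w w d y y') (k : ℕ) :
    y' ^ k * (lpaVtx K G w * y ^ k) = lpaVtx K G w := by
  induction k with
  | zero => rw [pow_zero, pow_zero, one_mul, mul_one]
  | succ k ih =>
    calc y' ^ (k + 1) * (lpaVtx K G w * y ^ (k + 1))
          = y' ^ k * (y' * lpaVtx K G w * y) * y ^ k := by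
          simp only [pow_succ y', pow_succ' y, mul_assoc]
      _ = lpaVtx K G w := by rw [hy.ghost_mul_vtx, hy.ghost_mul, mul_assoc, ih]

theorem not_isNilpotent_conj (hx : IsPathPair u w d x x') (hy : IsPathPair w w d' y y')
    (hw : lpaVtx K G w ≠ 0) : ¬ IsNilpotent (x * y * x') := by
  rintro ⟨k, hk⟩
  apply hw
  rw [← hy.ghost_pow_mul_vtx_mul_pow k, ← hx.ghost_mul_conj_pow_mul hy k, hk, mul_zero,
    zero_mul, mul_zero]

end IsPathPair

end PathPair

/-- If the corner `vLv` of the Leavitt path algebra `L = L_K(E)` is von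
Neumann regular (every `x ∈ vLv` has a quasi-inverse inside the corner), then the tree
`T_E(v)` contains no cycles. -/
theorem stmt13 (K : Type) [Field K] (G : DGraph) (v : G.V)
    (hreg : ∀ x : LPA K G, lpaVtx K G v * x * lpaVtx K G v = x →
      ∃ b : LPA K G, x * (lpaVtx K G v * b * lpaVtx K G v) * x = x) :
    ¬ ∃ (c : List G.E) (w : G.V), G.IsCycle c ∧ w ∈ c.map G.src ∧ G.Reaches v w := by
  rintro ⟨c, w, hc, hw, hvw⟩
  have hcycle := hc.transGen_adj_self hw
  obtain ⟨p, hp, hp0⟩ := DGraph.exists_isInfPath_of_transGen hcycle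
  obtain ⟨d, x, x', hx⟩ := IsPathPair.exists_of_reaches (K := K) hvw
  obtain ⟨n, y, y', hn, hy⟩ := IsPathPair.exists_of_transGen (K := K) hcycle
  have hv := isIdempotentElem_lpaVtx (K := K) v
  obtain ⟨b, hb⟩ := hreg (lpaVtx K G v + x * y * x') (by
    rw [mul_add, hv.eq, hx.vtx_mul_conj, add_mul, hv.eq, hx.conj_mul_vtx])
  refine AddMonoidAlgebra.single_add_single_mul_mul_ne (n := n) hv (hx.vtx_mul_conj y) (hx.conj_mul_vtx y)
    (hx.not_isNilpotent_conj hy (lpaVtx_ne_zero_of_isInfPath hp hp0)) (by exact_mod_cast hn)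
    (lpaGrading K G (lpaVtx K G v * b * lpaVtx K G v)) ?_
  simpa only [map_add, map_mul, lpaGrading_lpaVtx, hx.grading_conj hy] using
    congrArg (lpaGrading K G) hb
end

section
/- Let R be a ring with local units that is the union of a well-ordered continuous ascending chain of ideals 0 ≤ I₁ < I₂ < ⋯ < I_α < ⋯ (α < τ), where each I_α is a ring with local units. Then every simple left R-module S with RS = S is a simple left I_α-module for some α, namely any α such that I_α S ≠ 0. -/
/-- Let `R` be a ring with local units which is the union of a well-ordered
continuous ascending chain of two-sided ideals `I α` (each itself a ring with local
units).  Let `S` be a simple left `R`-module (hand-rolled action `μ`, since `R` may be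
non-unital) with `RS = S`.  Then there is some `α` with `I α • S ≠ 0`, and for every such
`α` the module `S` is a simple left `I α`-module: `I α • S = S` and the `I α`-stable
additive subgroups of `S` are only `⊥` and `⊤`. -/
theorem stmt19 (R : Type*) [NonUnitalRing R]
    -- R has local units:
    (hlocal : ∀ a b : R, ∃ e : R, e * e = e ∧ e * a = a ∧ a * e = a ∧ e * b = b ∧ b * e = b)
    (ι : Type*) [LinearOrder ι] [WellFoundedLT ι]
    (I : ι → TwoSidedIdeal R) (hmono : Monotone I)
    -- each I α has local units:
    (hIlocal : ∀ α : ι, ∀ a ∈ I α, ∃ e ∈ I α, e * e = e ∧ e * a = a ∧ a * e = a)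
    -- the chain is continuous at limit ordinals:
    (hcont : ∀ l : ι, (∀ β : ι, β < l → ∃ γ : ι, β < γ ∧ γ < l) →
      ∀ x ∈ I l, ∃ β : ι, β < l ∧ x ∈ I β)
    -- R is the union of the chain:
    (hunion : ∀ x : R, ∃ α : ι, x ∈ I α)
    (S : Type*) [AddCommGroup S] (μ : R → S → S)
    (hμ₁ : ∀ a b : R, ∀ s : S, μ (a + b) s = μ a s + μ b s)
    (hμ₂ : ∀ a : R, ∀ s t : S, μ a (s + t) = μ a s + μ a t)
    (hμ₃ : ∀ a b : R, ∀ s : S, μ (a * b) s = μ a (μ b s))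
    -- S is simple: the action is nontrivial and there are no proper stable subgroups
    (hnt : ∃ a : R, ∃ s : S, μ a s ≠ 0)
    (hsimple : ∀ T : AddSubgroup S, (∀ a : R, ∀ s ∈ T, μ a s ∈ T) → T = ⊥ ∨ T = ⊤)
    -- RS = S:
    (hRS : ∀ s : S, s ∈ AddSubgroup.closure {t : S | ∃ a : R, ∃ u : S, t = μ a u}) :
    (∃ α : ι, ∃ a ∈ I α, ∃ s : S, μ a s ≠ 0) ∧
    (∀ α : ι, (∃ a ∈ I α, ∃ s : S, μ a s ≠ 0) →
      (∀ s : S, s ∈ AddSubgroup.closure {t : S | ∃ a ∈ I α, ∃ u : S, t = μ a u}) ∧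
      (∀ T : AddSubgroup S, (∀ a ∈ I α, ∀ s ∈ T, μ a s ∈ T) → T = ⊥ ∨ T = ⊤)) := by

  classical
  -- each `μ b` as an additive group hom
  set f : R → S →+ S := fun b => AddMonoidHom.mk' (μ b) (hμ₂ b) with hf
  have hfapp : ∀ b s, f b s = μ b s := fun _ _ => rfl
  -- stability of closures
  have stab : ∀ (X : Set S), (∀ x ∈ X, ∀ b : R, μ b x ∈ AddSubgroup.closure X) →
      ∀ b : R, ∀ s ∈ AddSubgroup.closure X, μ b s ∈ AddSubgroup.closure X := by
    intro X hX b s hs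
    have h1 : X ⊆ ((AddSubgroup.closure X).comap (f b) : AddSubgroup S) := by
      intro x hx
      exact hX x hx b
    have h2 := (AddSubgroup.closure_le _).2 h1
    exact h2 hs
  constructor
  · obtain ⟨a, s, h⟩ := hnt
    obtain ⟨α, ha⟩ := hunion a
    exact ⟨α, a, ha, s, h⟩
  · rintro α ⟨a, ha, s, hs⟩
    constructor
    · -- I α • S = S
      set X : Set S := {t : S | ∃ a ∈ I α, ∃ u : S, t = μ a u} with hX
      have hstab : ∀ b : R, ∀ t ∈ AddSubgroup.closure X, μ b t ∈ AddSubgroup.closure X := by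
        apply stab
        rintro x ⟨c, hc, u, rfl⟩ b
        apply AddSubgroup.subset_closure
        exact ⟨b * c, TwoSidedIdeal.mul_mem_left _ _ _ hc, u, (hμ₃ b c u).symm⟩
      rcases hsimple (AddSubgroup.closure X) (fun b t ht => hstab b t ht) with h | h
      · exfalso
        apply hs
        have : μ a s ∈ AddSubgroup.closure X :=
          AddSubgroup.subset_closure ⟨a, ha, s, rfl⟩
        rw [h] at this
        exact this
      · intro t; rw [h]; trivial
    · intro T hT
      by_cases hbot : T = ⊥
      · exact Or.inl hbot
      right
      obtain ⟨t, ht, htne⟩ : ∃ t ∈ T, t ≠ 0 := by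
        by_contra hcon
        push_neg at hcon
        apply hbot
        ext x
        simp only [AddSubgroup.mem_bot]
        exact ⟨fun hx => hcon x hx, fun hx => hx ▸ T.zero_mem⟩
      set X : Set S := {x : S | ∃ c ∈ I α, x = μ c t} with hX
      have hstab : ∀ b : R, ∀ u ∈ AddSubgroup.closure X, μ b u ∈ AddSubgroup.closure X := by
        apply stab
        rintro x ⟨c, hc, rfl⟩ b
        apply AddSubgroup.subset_closure
        exact ⟨b * c, TwoSidedIdeal.mul_mem_left _ _ _ hc, (hμ₃ b c t).symm⟩
      rcases hsimple (AddSubgroup.closure X) (fun b u hu => hstab b u hu) with h | h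
      · -- then μ c t = 0 for all c ∈ I α; build the annihilated subgroup, R-stable, = ⊤
        exfalso
        have hzero : ∀ c ∈ I α, μ c t = 0 := by
          intro c hc
          have : μ c t ∈ AddSubgroup.closure X := AddSubgroup.subset_closure ⟨c, hc, rfl⟩
          rw [h] at this
          exact this
        set T'' : AddSubgroup S :=
          { carrier := {u : S | ∀ c ∈ I α, μ c u = 0}
            zero_mem' := fun c _ => (f c).map_zero
            add_mem' := by
              intro x y hx hy c hc
              rw [hμ₂]
              rw [hx c hc, hy c hc, add_zero]
            neg_mem' := by
              intro x hx c hc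
              have : μ c (-x) = - μ c x := (f c).map_neg x
              rw [this, hx c hc, neg_zero] } with hT''
        have hstab'' : ∀ b : R, ∀ u ∈ T'', μ b u ∈ T'' := by
          intro b u hu c hc
          rw [← hμ₃]
          exact hu (c * b) (TwoSidedIdeal.mul_mem_right _ _ _ hc)
        rcases hsimple T'' hstab'' with h' | h'
        · have : t ∈ T'' := hzero
          rw [h'] at this
          exact htne this
        · have : s ∈ T'' := by rw [h']; trivial
          exact hs (this a ha)
      · -- closure X = ⊤ and closure X ≤ T
        have hle : AddSubgroup.closure X ≤ T := by
          apply (AddSubgroup.closure_le _).2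
          rintro x ⟨c, hc, rfl⟩
          exact hT c hc t ht
        rw [h] at hle
        exact top_le_iff.1 hle
end
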